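/- arXiv:1910.10041 — 5 statements merged into one kernel-verified Lean document; each statement's English description precedes it below -/
import Mathlib

section
/- Let $v_1,\ldots,v_n$ be nonzero real numbers with $|v_i| \le 1$, let $\varepsilon_1,\ldots,\varepsilon_n$ be independent Rademacher random variables, and let $x > 0$ be a real number with upper integer part $k = \lceil x \rceil$. Then $\mathbb{P}(v_1\varepsilon_1 + \cdots + v_n\varepsilon_n = x) \le \binom{n}{\lceil (n+k)/2 \rceil}/2^n$. -/
open MeasureTheory ProbabilityTheory

/-- A Rademacher random variable takes values `1` and `-1` each with probability `1/2`. -/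
def IsRademacher {Ω : Type*} [MeasurableSpace Ω] (μ : Measure Ω) (f : Ω → ℝ) : Prop :=
  μ {ω | f ω = 1} = 1 / 2 ∧ μ {ω | f ω = -1} = 1 / 2

/-!
Each sign pattern `S` (the set of indices with `εᵢ = 1`) has probability `2⁻ⁿ`, so it suffices
to count the sets `S` with `∑_{i ∈ S} vᵢ - ∑_{i ∉ S} vᵢ = x`; flipping the signs on
`{i | vᵢ < 0}` lets us assume all weights positive. For positive weights bounded by `c` and any
target `t`, the number of such sets is at most `C(m, ⌈(m + ⌈|t|/c⌉)/2⌉)`: removing the largest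
weight `w` splits the sets into solutions for the targets `t - w` and `t + w`, one of which lies
a whole `w` further from `0` than `t`, and Pascal's rule closes the induction.
-/

open Finset

namespace Nat

theorem choose_succ_le_choose_of_le {n k : ℕ} (h : n ≤ 2 * k + 1) :
    n.choose (k + 1) ≤ n.choose k := by
  refine Nat.le_of_mul_le_mul_right ?_ k.succ_pos
  rw [Nat.choose_succ_right_eq]
  exact Nat.mul_le_mul_left _ (by omega)

theorem choose_le_choose_of_half_le {n r s : ℕ} (hr : n ≤ 2 * r) (hrs : r ≤ s) :
    n.choose s ≤ n.choose r := by
  induction s, hrs using Nat.le_induction with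
  | base => rfl
  | succ s hrs ih => exact (choose_succ_le_choose_of_le (by omega)).trans ih

section Ceil

variable {K : Type*} [Field K] [LinearOrder K] [IsStrictOrderedRing K] [FloorSemiring K]

theorem ceil_natCast_div_two (m : ℕ) : ⌈(m : K) / 2⌉₊ = (m + 1) / 2 := by
  apply le_antisymm
  · rw [Nat.ceil_le, div_le_iff₀ two_pos]
    exact_mod_cast (by omega : m ≤ (m + 1) / 2 * 2)
  · have h : (m : K) ≤ 2 * ⌈(m : K) / 2⌉₊ := by linarith [Nat.le_ceil ((m : K) / 2)]
    have : m ≤ 2 * ⌈(m : K) / 2⌉₊ := by exact_mod_cast h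
    omega

theorem ceil_div_le_ceil_div_add_one {a b c : K} (ha : 0 ≤ a) (hc : 0 < c) (h : b ≤ a + c) :
    ⌈b / c⌉₊ ≤ ⌈a / c⌉₊ + 1 := by
  rw [← Nat.ceil_add_one (by positivity), div_add_one hc.ne']
  gcongr

theorem ceil_div_add_one_le_ceil_div {a b c : K} (ha : 0 ≤ a) (hc : 0 < c) (h : a + c ≤ b) :
    ⌈a / c⌉₊ + 1 ≤ ⌈b / c⌉₊ := by
  rw [← Nat.ceil_add_one (by positivity), div_add_one hc.ne']
  gcongr

end Ceil

end Nat

/-- `C(m, ⌈(m + k)/2⌉)`, written with truncating division. -/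
def littlewoodOffordBound (m k : ℕ) : ℕ := m.choose ((m + k + 1) / 2)

theorem littlewoodOffordBound_antitone (m : ℕ) : Antitone (littlewoodOffordBound m) :=
  fun _ _ hk => Nat.choose_le_choose_of_half_le (by omega) (by omega)

theorem littlewoodOffordBound_add_le {m k j j' : ℕ} (hj : k ≤ j + 1) (hj' : k + 1 ≤ j') :
    littlewoodOffordBound m j + littlewoodOffordBound m j' ≤ littlewoodOffordBound (m + 1) k := by
  have hindex : (m + 1 + k + 1) / 2 = (m + k) / 2 + 1 := by omega
  simp only [littlewoodOffordBound]
  rw [hindex, Nat.choose_succ_succ]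
  refine add_le_add ?_ (Nat.choose_le_choose_of_half_le (by omega) (by omega))
  rcases k with _ | k
  · exact Nat.choose_le_middle _ _
  · exact Nat.choose_le_choose_of_half_le (by omega) (by omega)

section SignedSum

variable {ι : Type*} [DecidableEq ι]

/-- The value of `∑ i ∈ E, w i * ε i` for the signs `ε = 1` on `S` and `ε = -1` off `S`. -/
def signedSum (E : Finset ι) (w : ι → ℝ) (S : Finset ι) : ℝ :=
  ∑ i ∈ E, if i ∈ S then w i else -w i

noncomputable def signedSumLevel (E : Finset ι) (w : ι → ℝ) (t : ℝ) : Finset (Finset ι) :=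
  E.powerset.filter fun S => signedSum E w S = t

theorem mem_signedSumLevel {E S : Finset ι} {w : ι → ℝ} {t : ℝ} :
    S ∈ signedSumLevel E w t ↔ S ⊆ E ∧ signedSum E w S = t := by
  rw [signedSumLevel, mem_filter, mem_powerset]

theorem signedSum_eq_sum_mul {E S : Finset ι} {w e : ι → ℝ}
    (he : ∀ i ∈ E, e i = if i ∈ S then 1 else -1) :
    signedSum E w S = ∑ i ∈ E, w i * e i :=
  sum_congr rfl fun i hi => by rw [he i hi]; split_ifs <;> ring

theorem signedSum_abs_symmDiff (E S : Finset ι) (w : ι → ℝ) :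
    signedSum E (fun i => |w i|) (symmDiff S (E.filter fun i => w i < 0)) = signedSum E w S := by
  refine sum_congr rfl fun i hi => ?_
  by_cases hwi : w i < 0
  · by_cases hiS : i ∈ S <;> simp [mem_symmDiff, hi, hiS, hwi, abs_of_neg]
  · by_cases hiS : i ∈ S <;> simp [mem_symmDiff, hiS, hwi, abs_of_nonneg (not_lt.1 hwi)]

theorem card_signedSumLevel_abs (E : Finset ι) (w : ι → ℝ) (t : ℝ) :
    #(signedSumLevel E (fun i => |w i|) t) = #(signedSumLevel E w t) := by
  set N := E.filter fun i => w i < 0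
  have hN {S : Finset ι} (hS : S ⊆ E) : symmDiff S N ⊆ E :=
    symmDiff_subset_union.trans (union_subset hS (filter_subset _ _))
  refine card_nbij' (symmDiff · N) (symmDiff · N) (fun S hS => ?_) (fun S hS => ?_)
    (fun S _ => symmDiff_symmDiff_cancel_right N S) (fun S _ => symmDiff_symmDiff_cancel_right N S)
  · rw [mem_coe, mem_signedSumLevel] at hS ⊢
    exact ⟨hN hS.1, by rw [← signedSum_abs_symmDiff, symmDiff_symmDiff_cancel_right, hS.2]⟩
  · rw [mem_coe, mem_signedSumLevel] at hS ⊢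
    exact ⟨hN hS.1, (signedSum_abs_symmDiff E S w).trans hS.2⟩

theorem signedSum_insert {a : ι} {s : Finset ι} (ha : a ∉ s) (w : ι → ℝ) (S : Finset ι) :
    signedSum (insert a s) w S = (if a ∈ S then w a else -w a) + signedSum s w S :=
  sum_insert ha

theorem signedSum_insert_of_notMem {a : ι} {s : Finset ι} (ha : a ∉ s) (w : ι → ℝ)
    (S : Finset ι) : signedSum s w (insert a S) = signedSum s w S :=
  sum_congr rfl fun i hi => by simp [ne_of_mem_of_not_mem hi ha]

theorem card_signedSumLevel_insert {a : ι} {s : Finset ι} (ha : a ∉ s) (w : ι → ℝ) (t : ℝ) :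
    #(signedSumLevel (insert a s) w t)
      = #(signedSumLevel s w (t - w a)) + #(signedSumLevel s w (t + w a)) := by
  have hnot {S : Finset ι} (hS : S ⊆ s) : a ∉ S := fun haS => ha (hS haS)
  have hsplit : signedSumLevel (insert a s) w t
      = (signedSumLevel s w (t - w a)).image (insert a) ∪ signedSumLevel s w (t + w a) := by
    rw [signedSumLevel, powerset_insert, filter_union, filter_image, union_comm]
    congr 1
    · refine congrArg _ (filter_congr fun S hS => ?_)
      rw [signedSum_insert ha, if_pos (mem_insert_self a S), signedSum_insert_of_notMem ha]
      constructor <;> intro h <;> linarith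
    · refine filter_congr fun S hS => ?_
      rw [signedSum_insert ha, if_neg (hnot (mem_powerset.1 hS))]
      constructor <;> intro h <;> linarith
  rw [hsplit, card_union_of_disjoint, card_image_of_injOn]
  · intro S hS T hT hST
    rw [mem_coe, mem_signedSumLevel] at hS hT
    rw [← erase_insert (hnot hS.1), hST, erase_insert (hnot hT.1)]
  · refine disjoint_left.2 fun T hT hT' => ?_
    obtain ⟨S, -, rfl⟩ := mem_image.1 hT
    exact ha ((mem_signedSumLevel.1 hT').1 (mem_insert_self a S))

theorem card_signedSumLevel_le_of_pos {E : Finset ι} {w : ι → ℝ} {c : ℝ}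
    (hw : ∀ i ∈ E, 0 < w i) (hwc : ∀ i ∈ E, w i ≤ c) (t : ℝ) :
    #(signedSumLevel E w t) ≤ littlewoodOffordBound #E ⌈|t| / c⌉₊ := by
  induction E using Finset.induction_on_max_value w generalizing c t with
  | empty =>
    rcases eq_or_ne t 0 with rfl | ht
    · simp [littlewoodOffordBound, signedSumLevel, signedSum]
    · simp [signedSumLevel, signedSum, ht.symm]
  | insert a s ha hmax ih =>
    have hpos : 0 < w a := hw a (mem_insert_self a s)
    have hs : ∀ i ∈ s, 0 < w i := fun i hi => hw i (mem_insert_of_mem hi)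
    have hstep : #(signedSumLevel (insert a s) w t)
        ≤ littlewoodOffordBound (#s + 1) ⌈|t| / w a⌉₊ := by
      rw [card_signedSumLevel_insert ha]
      have hnear (u : ℝ) (h : |t| ≤ |u| + w a) : ⌈|t| / w a⌉₊ ≤ ⌈|u| / w a⌉₊ + 1 :=
        Nat.ceil_div_le_ceil_div_add_one (abs_nonneg u) hpos h
      have hfar (u : ℝ) (h : |t| + w a ≤ |u|) : ⌈|t| / w a⌉₊ + 1 ≤ ⌈|u| / w a⌉₊ :=
        Nat.ceil_div_add_one_le_ceil_div (abs_nonneg t) hpos h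
      have ih_sub := ih hs hmax (t - w a)
      have ih_add := ih hs hmax (t + w a)
      rcases le_total 0 t with ht | ht
      · refine (add_le_add ih_sub ih_add).trans (littlewoodOffordBound_add_le
          (hnear _ ?_) (hfar _ ?_)) <;> rw [abs_of_nonneg ht]
        · linarith [le_abs_self (t - w a)]
        · linarith [le_abs_self (t + w a)]
      · rw [add_comm]
        refine (add_le_add ih_add ih_sub).trans (littlewoodOffordBound_add_le
          (hnear _ ?_) (hfar _ ?_)) <;> rw [abs_of_nonpos ht]
        · linarith [neg_abs_le (t + w a)]
        · linarith [neg_abs_le (t - w a)]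
    rw [card_insert_of_notMem ha]
    refine hstep.trans (littlewoodOffordBound_antitone _ (Nat.ceil_mono ?_))
    exact div_le_div_of_nonneg_left (abs_nonneg t) hpos (hwc a (mem_insert_self a s))

theorem card_signedSumLevel_le {E : Finset ι} {w : ι → ℝ} {c : ℝ}
    (hw : ∀ i ∈ E, w i ≠ 0) (hwc : ∀ i ∈ E, |w i| ≤ c) (t : ℝ) :
    #(signedSumLevel E w t) ≤ littlewoodOffordBound #E ⌈|t| / c⌉₊ :=
  card_signedSumLevel_abs E w t ▸
    card_signedSumLevel_le_of_pos (fun i hi => abs_pos.2 (hw i hi)) hwc t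

end SignedSum

section Rademacher

variable {Ω ι : Type*} [MeasurableSpace Ω] {μ : Measure Ω}

theorem IsRademacher.ae_eq_one_or_eq_neg_one [IsProbabilityMeasure μ] {f : Ω → ℝ}
    (hf : Measurable f) (h : IsRademacher μ f) : ∀ᵐ ω ∂μ, f ω = 1 ∨ f ω = -1 := by
  have hdisj : Disjoint {ω | f ω = 1} {ω | f ω = -1} :=
    Set.disjoint_left.2 fun ω (h1 : f ω = 1) (h2 : f ω = -1) => by norm_num [h1] at h2
  have hmeas : MeasurableSet {ω | f ω = 1 ∨ f ω = -1} :=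
    (hf (measurableSet_singleton 1)).union (hf (measurableSet_singleton (-1)))
  rw [ae_iff_measure_eq hmeas.nullMeasurableSet, Set.ofPred_or,
    measure_union hdisj (hf (measurableSet_singleton _)), h.1, h.2, ENNReal.add_halves,
    measure_univ]

theorem measure_signPattern_eq {ε : ι → Ω → ℝ} (hindep : iIndepFun ε μ)
    (hrad : ∀ i, IsRademacher μ (ε i)) [DecidableEq ι] (E S : Finset ι) :
    μ {ω | ∀ i ∈ E, ε i ω = if i ∈ S then 1 else -1} = (1 / 2) ^ #E := by
  have hinter : {ω | ∀ i ∈ E, ε i ω = if i ∈ S then 1 else -1}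
      = ⋂ i ∈ E, ε i ⁻¹' {if i ∈ S then 1 else -1} := by
    ext ω
    simp
  rw [hinter, hindep.meas_biInter fun i _ => ⟨_, measurableSet_singleton _, rfl⟩]
  rw [prod_congr rfl fun i _ => ?_, prod_const]
  split_ifs
  exacts [(hrad i).1, (hrad i).2]

theorem measure_sum_mul_eq_le_card_signedSumLevel [IsProbabilityMeasure μ] {ε : ι → Ω → ℝ}
    (hmeas : ∀ i, Measurable (ε i)) (hindep : iIndepFun ε μ)
    (hrad : ∀ i, IsRademacher μ (ε i)) [DecidableEq ι] (E : Finset ι) (v : ι → ℝ) (x : ℝ) :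
    μ {ω | ∑ i ∈ E, v i * ε i ω = x} ≤ #(signedSumLevel E v x) * (1 / 2) ^ #E := by
  have hsigns : ∀ᵐ ω ∂μ, ∀ i ∈ E, ε i ω = 1 ∨ ε i ω = -1 :=
    (Filter.eventually_all_finset E).2 fun i _ => (hrad i).ae_eq_one_or_eq_neg_one (hmeas i)
  calc μ {ω | ∑ i ∈ E, v i * ε i ω = x}
      ≤ μ (⋃ S ∈ signedSumLevel E v x, {ω | ∀ i ∈ E, ε i ω = if i ∈ S then 1 else -1}) := by
        refine measure_mono_ae (hsigns.mono fun ω hω hx => ?_)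
        have hpattern : ∀ i ∈ E, ε i ω = if i ∈ E.filter (ε · ω = 1) then 1 else -1 :=
          fun i hi => by rcases hω i hi with h | h <;> simp [hi, h]
        refine Set.mem_iUnion₂.2 ⟨_, mem_signedSumLevel.2 ⟨filter_subset _ _, ?_⟩, hpattern⟩
        exact (signedSum_eq_sum_mul hpattern).trans hx
    _ ≤ ∑ S ∈ signedSumLevel E v x, μ {ω | ∀ i ∈ E, ε i ω = if i ∈ S then 1 else -1} :=
        measure_biUnion_finset_le _ _
    _ = #(signedSumLevel E v x) * (1 / 2) ^ #E := by
        rw [sum_congr rfl fun S _ => measure_signPattern_eq hindep hrad E S, sum_const, nsmul_eq_mul]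

end Rademacher

theorem littlewood_offord_nonuniform_dim_one_general
    {Ω : Type*} [MeasurableSpace Ω] (μ : Measure Ω) [IsProbabilityMeasure μ]
    (n : ℕ) (v : ℕ → ℝ) (hv0 : ∀ i < n, v i ≠ 0) (hv1 : ∀ i < n, |v i| ≤ 1)
    (ε : ℕ → Ω → ℝ) (hmeas : ∀ i, Measurable (ε i))
    (hindep : iIndepFun ε μ)
    (hrad : ∀ i, IsRademacher μ (ε i))
    (x : ℝ) :
    μ {ω | ∑ i ∈ Finset.range n, v i * ε i ω = x}
      ≤ (n.choose ⌈((n : ℚ) + ⌈x⌉₊) / 2⌉₊ : ENNReal) / 2 ^ n := by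
  have hcount : #(signedSumLevel (range n) v x) ≤ littlewoodOffordBound n ⌈x⌉₊ := by
    refine (card_signedSumLevel_le (c := 1) (fun i hi => hv0 i (mem_range.1 hi))
      (fun i hi => hv1 i (mem_range.1 hi)) x).trans ?_
    rw [card_range, div_one]
    exact littlewoodOffordBound_antitone n (Nat.ceil_mono (le_abs_self x))
  have hindex : ⌈((n : ℚ) + ⌈x⌉₊) / 2⌉₊ = (n + ⌈x⌉₊ + 1) / 2 := by
    rw [← Nat.ceil_natCast_div_two (K := ℚ)]
    push_cast
    rfl
  calc μ {ω | ∑ i ∈ range n, v i * ε i ω = x}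
      ≤ #(signedSumLevel (range n) v x) * (1 / 2) ^ n := by
        simpa using measure_sum_mul_eq_le_card_signedSumLevel hmeas hindep hrad (range n) v x
    _ ≤ littlewoodOffordBound n ⌈x⌉₊ * (1 / 2) ^ n := by gcongr
    _ = _ := by
        rw [littlewoodOffordBound, ← hindex, one_div, ← ENNReal.inv_pow]
        exact (div_eq_mul_inv _ _).symm

theorem littlewood_offord_nonuniform_dim_one
    {Ω : Type*} [MeasurableSpace Ω] (μ : Measure Ω) [IsProbabilityMeasure μ]
    (n : ℕ) (v : ℕ → ℝ) (hv0 : ∀ i < n, v i ≠ 0) (hv1 : ∀ i < n, |v i| ≤ 1)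
    (ε : ℕ → Ω → ℝ) (hmeas : ∀ i, Measurable (ε i))
    (hindep : iIndepFun ε μ)
    (hrad : ∀ i, IsRademacher μ (ε i))
    (x : ℝ) (hx : 0 < x) :
    μ {ω | ∑ i ∈ Finset.range n, v i * ε i ω = x}
      ≤ (n.choose ⌈((n : ℚ) + ⌈x⌉₊) / 2⌉₊ : ENNReal) / 2 ^ n :=
  littlewood_offord_nonuniform_dim_one_general μ n v hv0 hv1 ε hmeas hindep hrad x
end

section
/- Let $v_1,\ldots,v_n$ be nonzero vectors in $\mathbb{R}^d$ with $\|v_i\|_2 \le 1$, let $\varepsilon_1,\ldots,\varepsilon_n$ be independent Rademacher random variables, and let $x \in \mathbb{R}^d$ be nonzero with $k = \lceil \|x\|_2 \rceil$. Then $\mathbb{P}(v_1\varepsilon_1 + \cdots + v_n\varepsilon_n = x) \le \binom{n}{\lceil (n+k)/2 \rceil}/2^n$. -/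
open MeasureTheory ProbabilityTheory

/-!
Project onto a unit vector `u` with every `⟪v i, u⟫ ≠ 0` and `⟪x, u⟫ > k - 1`; it exists because
the hyperplanes `(v i)ᗮ` are nowhere dense. A sign pattern hitting `x` then hits `⟪x, u⟫` with the
real weights `b i = ⟪v i, u⟫`. Flipping the indices with `b i < 0` turns each such pattern into a
set `A` of prescribed weight `∑ i ∈ A, |b i|`. Sets of equal positive weight form an antichain, and
two of them share weight `> k - 1`, hence (as `|b i| ≤ 1`) at least `k` elements. Milner's theorem
bounds a `k`-intersecting antichain on `n` points by `n.choose ⌈(n + k) / 2⌉`: the layers of the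
antichain are pushed towards that size, upwards by Katona's shadow theorem for intersecting families
(applied to complements), downwards by the local LYM inequality. Each sign pattern has probability
`2⁻ⁿ`.
-/

open Finset
open scoped FinsetFamily RealInnerProductSpace symmDiff

namespace LittlewoodOfford

section SetFamily

variable {α : Type*} [DecidableEq α] {U : Finset α} {𝒜 ℬ : Finset (Finset α)} {r t : ℕ}

def TIntersecting (t : ℕ) (𝒜 : Finset (Finset α)) : Prop :=
  ∀ A ∈ 𝒜, ∀ B ∈ 𝒜, t ≤ #(A ∩ B)

theorem TIntersecting.mono (h : TIntersecting t ℬ) (h𝒜ℬ : 𝒜 ⊆ ℬ) : TIntersecting t 𝒜 :=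
  fun A hA B hB => h A (h𝒜ℬ hA) B (h𝒜ℬ hB)

theorem TIntersecting.of_forall_exists_subset (h : TIntersecting t 𝒜)
    (hℬ : ∀ B ∈ ℬ, ∃ A ∈ 𝒜, A ⊆ B) : TIntersecting t ℬ := by
  intro B hB C hC
  obtain ⟨A, hA, hAB⟩ := hℬ B hB
  obtain ⟨A', hA', hA'C⟩ := hℬ C hC
  exact (h A hA A' hA').trans (card_le_card (inter_subset_inter hAB hA'C))

theorem card_mul_le_card_shadow_mul_of_subset_powerset (hU : 𝒜 ⊆ U.powerset)
    (hr : (𝒜 : Set (Finset α)).Sized r) : #𝒜 * r ≤ #(shadow 𝒜) * (#U - r + 1) := by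
  refine card_mul_le_card_mul' (· ⊆ ·) (fun A hA => ?_) (fun B hB => ?_)
  · rw [← hr hA, ← card_image_of_injOn A.erase_injOn]
    refine card_le_card ?_
    simp_rw [image_subset_iff, mem_bipartiteBelow]
    exact fun a ha => ⟨erase_mem_shadow hA ha, erase_subset _ _⟩
  · obtain ⟨A, hA, hBA, hAB⟩ := mem_shadow_iff_exists_mem_card_add_one.1 hB
    have hBU : B ⊆ U := hBA.trans (mem_powerset.1 (hU hA))
    have hBr : #B + 1 = r := hAB ▸ hr hA
    calc #(𝒜.bipartiteAbove (· ⊆ ·) B) ≤ #((U \ B).image (insert · B)) := by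
          refine card_le_card fun A' hA' => ?_
          obtain ⟨hA', hBA'⟩ := (mem_bipartiteAbove _).1 hA'
          obtain ⟨a, haB, rfl⟩ := exists_eq_insert_iff.2 ⟨hBA', by rw [hBr, hr hA']⟩
          exact mem_image_of_mem _
            (mem_sdiff.2 ⟨mem_powerset.1 (hU hA') (mem_insert_self a B), haB⟩)
      _ ≤ #U - r + 1 := by
          refine card_image_le.trans ?_
          rw [card_sdiff_of_subset hBU]
          omega

theorem card_le_card_shadow_of_sized (hU : 𝒜 ⊆ U.powerset) (hr : (𝒜 : Set (Finset α)).Sized r)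
    (hUr : #U + 1 ≤ 2 * r) : #𝒜 ≤ #(shadow 𝒜) := by
  have h := card_mul_le_card_shadow_mul_of_subset_powerset hU hr
  exact Nat.le_of_mul_le_mul_right (h.trans (Nat.mul_le_mul_left _ (by omega))) (by omega)

theorem sized_memberSubfamily (hr : (𝒜 : Set (Finset α)).Sized r) (a : α) :
    (𝒜.memberSubfamily a : Set (Finset α)).Sized (r - 1) := by
  intro A hA
  obtain ⟨hA, haA⟩ := mem_memberSubfamily.1 hA
  have := hr hA
  rw [card_insert_of_notMem haA] at this
  omega

theorem memberSubfamily_subset_powerset {a : α} (h𝒜 : 𝒜 ⊆ (insert a U).powerset) :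
    𝒜.memberSubfamily a ⊆ U.powerset := fun A hA => by
  obtain ⟨hA, haA⟩ := mem_memberSubfamily.1 hA
  exact mem_powerset.2 ((subset_insert_iff_of_notMem haA).1
    ((subset_insert a A).trans (mem_powerset.1 (h𝒜 hA))))

theorem nonMemberSubfamily_subset_powerset {a : α} (h𝒜 : 𝒜 ⊆ (insert a U).powerset) :
    𝒜.nonMemberSubfamily a ⊆ U.powerset := fun A hA => by
  obtain ⟨hA, haA⟩ := mem_nonMemberSubfamily.1 hA
  exact mem_powerset.2 ((subset_insert_iff_of_notMem haA).1 (mem_powerset.1 (h𝒜 hA)))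

theorem card_shadow_nonMemberSubfamily_add_card_shadow_memberSubfamily_le (a : α) :
    #(shadow (𝒜.nonMemberSubfamily a)) + #(shadow (𝒜.memberSubfamily a)) ≤ #(shadow 𝒜) := by
  rw [← card_memberSubfamily_add_card_nonMemberSubfamily a (shadow 𝒜), add_comm]
  gcongr
  · intro B hB
    obtain ⟨A, hA, x, hx, rfl⟩ := mem_shadow_iff.1 hB
    obtain ⟨hA, haA⟩ := mem_memberSubfamily.1 hA
    refine mem_memberSubfamily.2 ⟨?_, fun h => haA (mem_of_mem_erase h)⟩
    rw [← erase_insert_of_ne (ne_of_mem_of_not_mem hx haA).symm]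
    exact erase_mem_shadow hA (mem_insert_of_mem hx)
  · intro B hB
    obtain ⟨A, hA, x, hx, rfl⟩ := mem_shadow_iff.1 hB
    obtain ⟨hA, haA⟩ := mem_nonMemberSubfamily.1 hA
    exact mem_nonMemberSubfamily.2 ⟨erase_mem_shadow hA hx, fun h => haA (mem_of_mem_erase h)⟩

end SetFamily

section Compression

variable {α : Type*} [DecidableEq α] {i j : α} {A B : Finset α} {U : Finset α}
  {𝒜 : Finset (Finset α)} {t : ℕ}

theorem compress_singleton_of_mem_of_notMem (hj : j ∈ A) (hi : i ∉ A) :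
    UV.compress {i} {j} A = insert i (A.erase j) := by
  rw [UV.compress_of_disjoint_of_le (disjoint_singleton_left.2 hi) (singleton_subset_iff.2 hj),
    sup_eq_union, union_comm, ← insert_eq,
    insert_sdiff_of_notMem _ (notMem_singleton.2 (ne_of_mem_of_not_mem hj hi).symm),
    sdiff_singleton_eq_erase]

theorem compress_singleton_eq_self (h : ¬(j ∈ A ∧ i ∉ A)) : UV.compress {i} {j} A = A := by
  rw [UV.compress, if_neg (by simpa [and_comm] using h)]

theorem exists_of_mem_compression_of_notMem {A' : Finset α} (h : A' ∈ 𝓒 {i} {j} 𝒜)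
    (hA' : A' ∉ 𝒜) : ∃ A ∈ 𝒜, j ∈ A ∧ i ∉ A ∧ A' = insert i (A.erase j) := by
  obtain ⟨h, -⟩ | ⟨-, A, hA, rfl⟩ := UV.mem_compression.1 h
  · exact absurd h hA'
  by_cases hjA : j ∈ A ∧ i ∉ A
  · exact ⟨A, hA, hjA.1, hjA.2, compress_singleton_of_mem_of_notMem hjA.1 hjA.2⟩
  · rw [compress_singleton_eq_self hjA] at hA'
    exact absurd hA hA'

theorem card_insert_erase_of_mem_of_notMem (hj : j ∈ A) (hi : i ∉ A) :
    #(insert i (A.erase j)) = #A := by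
  rw [card_insert_of_notMem (fun h => hi (mem_of_mem_erase h)), card_erase_add_one hj]

theorem le_card_insert_erase_inter (hj : j ∈ A) (hi : i ∉ A) (hAB : t ≤ #(A ∩ B))
    (hAcB : t ≤ #(A ∩ UV.compress {i} {j} B)) : t ≤ #(insert i (A.erase j) ∩ B) := by
  by_cases hiB : i ∈ B
  · by_cases hjB : j ∈ B
    · rwa [insert_inter_of_mem hiB, erase_inter, card_insert_erase_of_mem_of_notMem
        (mem_inter.2 ⟨hj, hjB⟩) (fun h => hi (mem_inter.1 h).1)]
    · rw [insert_inter_of_mem hiB, erase_inter, erase_eq_of_notMem (fun h => hjB (mem_inter.1 h).2),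
        card_insert_of_notMem (fun h => hi (mem_inter.1 h).1)]
      exact hAB.trans (Nat.le_succ _)
  · rw [insert_inter_of_notMem hiB, erase_inter]
    by_cases hjB : j ∈ B
    · rwa [compress_singleton_of_mem_of_notMem hjB hiB, inter_insert_of_notMem hi,
        inter_erase] at hAcB
    · rwa [erase_eq_of_notMem (fun h => hjB (mem_inter.1 h).2)]

theorem TIntersecting.compression (h : TIntersecting t 𝒜) (i j : α) :
    TIntersecting t (𝓒 {i} {j} 𝒜) := by
  have compress_mem {B} (hB : B ∈ 𝓒 {i} {j} 𝒜) (hB𝒜 : B ∈ 𝒜) : UV.compress {i} {j} B ∈ 𝒜 :=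
    ((UV.mem_compression.1 hB).resolve_right fun h => h.1 hB𝒜).2
  intro A' hA' B' hB'
  by_cases hA'𝒜 : A' ∈ 𝒜 <;> by_cases hB'𝒜 : B' ∈ 𝒜
  · exact h A' hA'𝒜 B' hB'𝒜
  · obtain ⟨B, hB, hjB, hiB, rfl⟩ := exists_of_mem_compression_of_notMem hB' hB'𝒜
    rw [inter_comm]
    exact le_card_insert_erase_inter hjB hiB (h B hB A' hA'𝒜) (h B hB _ (compress_mem hA' hA'𝒜))
  · obtain ⟨A, hA, hjA, hiA, rfl⟩ := exists_of_mem_compression_of_notMem hA' hA'𝒜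
    exact le_card_insert_erase_inter hjA hiA (h A hA B' hB'𝒜) (h A hA _ (compress_mem hB' hB'𝒜))
  · obtain ⟨A, hA, hjA, hiA, rfl⟩ := exists_of_mem_compression_of_notMem hA' hA'𝒜
    obtain ⟨B, hB, hjB, hiB, rfl⟩ := exists_of_mem_compression_of_notMem hB' hB'𝒜
    calc t ≤ #(A ∩ B) := h A hA B hB
      _ = #(insert i ((A ∩ B).erase j)) := (card_insert_erase_of_mem_of_notMem
          (mem_inter.2 ⟨hjA, hjB⟩) (fun h => hiA (mem_inter.1 h).1)).symm
      _ ≤ #(insert i (A.erase j) ∩ insert i (B.erase j)) := by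
          rw [← insert_inter_distrib, erase_inter, inter_erase, erase_idem]

theorem compression_subset_powerset (hi : i ∈ U) (h𝒜 : 𝒜 ⊆ U.powerset) :
    𝓒 {i} {j} 𝒜 ⊆ U.powerset := by
  intro A' hA'
  by_cases hA'𝒜 : A' ∈ 𝒜
  · exact h𝒜 hA'𝒜
  obtain ⟨A, hA, -, -, rfl⟩ := exists_of_mem_compression_of_notMem hA' hA'𝒜
  exact mem_powerset.2 (insert_subset hi ((erase_subset _ _).trans (mem_powerset.1 (h𝒜 hA))))

end Compression

section Katona

variable {n r t : ℕ} {𝒜 ℬ : Finset (Finset ℕ)}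

def IsShifted (n : ℕ) (𝒜 : Finset (Finset ℕ)) : Prop :=
  ∀ i j, i < j → j < n → UV.IsCompressed {i} {j} 𝒜

def binaryWeight (𝒜 : Finset (Finset ℕ)) : ℕ := ∑ A ∈ 𝒜, ∑ a ∈ A, 2 ^ a

theorem sum_pow_compress_lt {i j : ℕ} (hij : i < j) {A : Finset ℕ}
    (hA : UV.compress {i} {j} A ≠ A) : ∑ a ∈ UV.compress {i} {j} A, 2 ^ a < ∑ a ∈ A, 2 ^ a := by
  by_cases hjA : j ∈ A ∧ i ∉ A
  · rw [compress_singleton_of_mem_of_notMem hjA.1 hjA.2,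
      sum_insert (fun h => hjA.2 (mem_of_mem_erase h)), ← sum_erase_add _ _ hjA.1, add_comm]
    exact Nat.add_lt_add_left (Nat.pow_lt_pow_right one_lt_two hij) _
  · exact absurd (compress_singleton_eq_self hjA) hA

theorem binaryWeight_compression_lt {i j : ℕ} (hij : i < j) (h : ¬UV.IsCompressed {i} {j} 𝒜) :
    binaryWeight (𝓒 {i} {j} 𝒜) < binaryWeight 𝒜 := by
  have hsplit := filter_union_filter_not_eq (UV.compress {i} {j} · ∈ 𝒜) 𝒜
  have hne : {A ∈ 𝒜 | UV.compress {i} {j} A ∉ 𝒜}.Nonempty := by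
    contrapose! h
    rw [UV.IsCompressed, UV.compression, filter_image, h, image_empty, union_empty]
    rwa [h, union_empty] at hsplit
  have hinj : Set.InjOn (UV.compress ({i} : Finset ℕ) {j}) ↑{A ∈ 𝒜 | UV.compress {i} {j} A ∉ 𝒜} :=
    UV.compress_injOn
  rw [binaryWeight, binaryWeight, UV.compression, sum_union UV.compress_disjoint]
  conv_rhs => rw [← hsplit]
  rw [sum_union (disjoint_filter_filter_not _ _ _), filter_image, sum_image hinj]
  refine Nat.add_lt_add_left (sum_lt_sum_of_nonempty hne fun A hA => sum_pow_compress_lt hij ?_) _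
  exact fun h' => (mem_filter.1 hA).2 (h'.symm ▸ (mem_filter.1 hA).1)

theorem exists_isShifted (𝒜 : Finset (Finset ℕ)) (h𝒜 : 𝒜 ⊆ (range n).powerset)
    (hr : (𝒜 : Set (Finset ℕ)).Sized r) (ht : TIntersecting t 𝒜) :
    ∃ ℬ : Finset (Finset ℕ), IsShifted n ℬ ∧ ℬ ⊆ (range n).powerset ∧
      (ℬ : Set (Finset ℕ)).Sized r ∧ TIntersecting t ℬ ∧ #ℬ = #𝒜 ∧ #(shadow ℬ) ≤ #(shadow 𝒜) := by
  by_cases hs : IsShifted n 𝒜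
  · exact ⟨𝒜, hs, h𝒜, hr, ht, rfl, le_rfl⟩
  obtain ⟨i, j, hij, hjn, hc⟩ : ∃ i j, i < j ∧ j < n ∧ ¬UV.IsCompressed {i} {j} 𝒜 := by
    simpa [IsShifted] using hs
  have := binaryWeight_compression_lt hij hc
  obtain ⟨ℬ, hℬ, hℬn, hℬr, hℬt, hcard, hshadow⟩ := exists_isShifted (𝓒 {i} {j} 𝒜)
    (compression_subset_powerset (mem_range.2 (hij.trans hjn)) h𝒜) (hr.uvCompression rfl)
    (ht.compression i j)
  refine ⟨ℬ, hℬ, hℬn, hℬr, hℬt, hcard.trans (UV.card_compression _ _ _),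
    hshadow.trans (UV.card_shadow_compression_le _ _ ?_)⟩
  simpa using UV.isCompressed_self ∅ 𝒜
termination_by binaryWeight 𝒜

theorem TIntersecting.memberSubfamily (ht : TIntersecting t ℬ) (hℬ : IsShifted (n + 1) ℬ)
    (hℬn : ℬ ⊆ (range (n + 1)).powerset) (hr : (ℬ : Set (Finset ℕ)).Sized r)
    (hrt : 2 * r ≤ n + t) : TIntersecting t (ℬ.memberSubfamily n) := by
  rw [range_add_one] at hℬn
  intro A hA' B hB'
  have hAn := mem_powerset.1 (memberSubfamily_subset_powerset hℬn hA')
  have hBn := mem_powerset.1 (memberSubfamily_subset_powerset hℬn hB')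
  obtain ⟨hA, hnA⟩ := mem_memberSubfamily.1 hA'
  obtain ⟨hB, hnB⟩ := mem_memberSubfamily.1 hB'
  have hAB := ht _ hA _ hB
  rw [← insert_inter_distrib, card_insert_of_notMem (fun h => hnA (mem_inter.1 h).1)] at hAB
  by_contra! hlt
  -- `A ∪ B` misses some `y < n`, and shifting `n` to `y` in `insert n B` loses a common element
  have hcard : #(A ∪ B) < n := by
    have := card_union_add_card_inter A B
    have hrA := hr hA
    have hrB := hr hB
    rw [card_insert_of_notMem hnA] at hrA
    rw [card_insert_of_notMem hnB] at hrB
    omega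
  obtain ⟨y, hy⟩ : (range n \ (A ∪ B)).Nonempty := by
    rw [← card_pos, card_sdiff_of_subset (union_subset hAn hBn), card_range]
    omega
  obtain ⟨hyn, hyAB⟩ := mem_sdiff.1 hy
  have hyn' : y ≠ n := (mem_range.1 hyn).ne
  have hyB : insert y B ∈ ℬ := by
    have := UV.compress_mem_compression (u := {y}) (v := {n}) hB
    have hynB : y ∉ insert n B := by
      rw [mem_insert, not_or]
      exact ⟨hyn', fun h => hyAB (mem_union_right A h)⟩
    rwa [(hℬ y n (mem_range.1 hyn) n.lt_add_one).eq,
      compress_singleton_of_mem_of_notMem (mem_insert_self n B) hynB, erase_insert hnB] at this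
  have := ht _ hA _ hyB
  rw [insert_inter_of_notMem (by simp [hyn'.symm, hnB]),
    inter_insert_of_notMem (fun h => hyAB (mem_union_left B h))] at this
  omega

theorem card_le_card_shadow_of_tIntersecting (ht : 1 ≤ t) (hrt : 2 * r ≤ n + t)
    (h𝒜 : 𝒜 ⊆ (range n).powerset) (hr : (𝒜 : Set (Finset ℕ)).Sized r)
    (h𝒜t : TIntersecting t 𝒜) : #𝒜 ≤ #(shadow 𝒜) := by
  induction n generalizing r 𝒜 with
  | zero =>
    suffices 𝒜 = ∅ by simp [this]
    refine eq_empty_of_forall_notMem fun A hA => ?_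
    have hA0 : A = ∅ := by simpa using h𝒜 hA
    have := h𝒜t A hA A hA
    rw [hA0, inter_self, card_empty] at this
    omega
  | succ n ih =>
    by_cases hlarge : n + 1 + 1 ≤ 2 * r
    · exact card_le_card_shadow_of_sized h𝒜 hr (by rwa [card_range])
    obtain ⟨ℬ, hℬ, hℬn, hℬr, hℬt, hcard, hshadow⟩ := exists_isShifted 𝒜 h𝒜 hr h𝒜t
    have hℬn' : ℬ ⊆ (insert n (range n)).powerset := range_add_one ▸ hℬn
    calc #𝒜 = #(ℬ.nonMemberSubfamily n) + #(ℬ.memberSubfamily n) := by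
          rw [← hcard, add_comm, card_memberSubfamily_add_card_nonMemberSubfamily]
      _ ≤ #(shadow (ℬ.nonMemberSubfamily n)) + #(shadow (ℬ.memberSubfamily n)) := by
          refine add_le_add ?_ ?_
          · exact ih (by omega) (nonMemberSubfamily_subset_powerset hℬn')
              (hℬr.mono (coe_subset.2 (filter_subset _ _))) (hℬt.mono (filter_subset _ _))
          · exact ih (r := r - 1) (by omega) (memberSubfamily_subset_powerset hℬn')
              (sized_memberSubfamily hℬr n) (hℬt.memberSubfamily hℬ hℬn hℬr (by omega))
      _ ≤ #(shadow ℬ) := card_shadow_nonMemberSubfamily_add_card_shadow_memberSubfamily_le n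
      _ ≤ #(shadow 𝒜) := hshadow

end Katona

section Layers

variable {α : Type*} [DecidableEq α] {U : Finset α} {ℱ 𝒢 : Finset (Finset α)} {m s : ℕ}

theorem disjoint_shadow_of_isAntichain (hanti : IsAntichain (· ⊆ ·) (ℱ : Set (Finset α)))
    (h𝒢 : 𝒢 ⊆ ℱ) : Disjoint ℱ (shadow 𝒢) := disjoint_left.2 fun B hB hB' => by
  obtain ⟨A, hA, hBA, hAB⟩ := mem_shadow_iff_exists_mem_card_add_one.1 hB'
  rw [hanti.eq hB (h𝒢 hA) hBA] at hAB
  omega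

theorem isAntichain_filter_ne_union_shadow (hanti : IsAntichain (· ⊆ ·) (ℱ : Set (Finset α)))
    (hℱs : ∀ A ∈ ℱ, #A ≤ s + 1) :
    IsAntichain (· ⊆ ·) (({A ∈ ℱ | #A ≠ s + 1} ∪ shadow {A ∈ ℱ | #A = s + 1} :
      Finset (Finset α)) : Set (Finset α)) := by
  have hℋ : ∀ A ∈ {A ∈ ℱ | #A ≠ s + 1}, A ∈ ℱ ∧ #A ≤ s := fun A hA => by
    obtain ⟨hA, hAs⟩ := mem_filter.1 hA
    exact ⟨hA, by have := hℱs A hA; omega⟩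
  have hshadow : ∀ B ∈ shadow {A ∈ ℱ | #A = s + 1}, #B = s ∧ ∃ A ∈ ℱ, B ⊆ A ∧ #A = s + 1 :=
    fun B hB => by
      obtain ⟨A, hA, hBA, hAB⟩ := mem_shadow_iff_exists_mem_card_add_one.1 hB
      obtain ⟨hA, hAs⟩ := mem_filter.1 hA
      exact ⟨by omega, A, hA, hBA, hAs⟩
  intro B hB C hC hBC hsub
  simp only [coe_union, Set.mem_union, mem_coe] at hB hC
  rcases hB with hB | hB <;> rcases hC with hC | hC
  · exact hBC (hanti.eq (hℋ B hB).1 (hℋ C hC).1 hsub)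
  · obtain ⟨-, A, hA, hCA, hAs⟩ := hshadow C hC
    have := (hℋ B hB).2
    rw [hanti.eq (hℋ B hB).1 hA (hsub.trans hCA)] at this
    omega
  · exact hBC (eq_of_subset_of_card_le hsub (by rw [(hshadow B hB).1]; exact (hℋ C hC).2))
  · exact hBC (eq_of_subset_of_card_le hsub (by rw [(hshadow B hB).1, (hshadow C hC).1]))

theorem exists_push_down_top_layer (hm : #U + 1 ≤ 2 * m) (hms : m ≤ s) (hℱ : ℱ ⊆ U.powerset)
    (hanti : IsAntichain (· ⊆ ·) (ℱ : Set (Finset α))) (hℱs : ∀ A ∈ ℱ, m ≤ #A ∧ #A ≤ s + 1) :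
    ∃ ℱ' : Finset (Finset α), ℱ' ⊆ U.powerset ∧ IsAntichain (· ⊆ ·) (ℱ' : Set (Finset α)) ∧
      (∀ A ∈ ℱ', m ≤ #A ∧ #A ≤ s) ∧ #ℱ ≤ #ℱ' := by
  set 𝒢 := {A ∈ ℱ | #A = s + 1}
  set ℋ := {A ∈ ℱ | #A ≠ s + 1}
  have h𝒢 : (𝒢 : Set (Finset α)).Sized (s + 1) := fun A hA => (mem_filter.1 hA).2
  refine ⟨ℋ ∪ shadow 𝒢, union_subset ((filter_subset _ _).trans hℱ) fun B hB => ?_,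
    isAntichain_filter_ne_union_shadow hanti fun A hA => (hℱs A hA).2, fun B hB => ?_, ?_⟩
  · obtain ⟨A, hA, hBA⟩ := exists_subset_of_mem_shadow hB
    exact mem_powerset.2 (hBA.trans (mem_powerset.1 (hℱ (mem_filter.1 hA).1)))
  · rcases mem_union.1 hB with hB | hB
    · obtain ⟨hB, hBs⟩ := mem_filter.1 hB
      exact ⟨(hℱs B hB).1, by have := (hℱs B hB).2; omega⟩
    · rw [h𝒢.shadow hB]
      exact ⟨hms, le_rfl⟩
  · calc #ℱ = #ℋ + #𝒢 := by rw [add_comm]; exact (card_filter_add_card_filter_not _).symm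
      _ ≤ #ℋ + #(shadow 𝒢) := Nat.add_le_add_left (card_le_card_shadow_of_sized
          ((filter_subset _ _).trans hℱ) h𝒢 (by omega)) _
      _ = #(ℋ ∪ shadow 𝒢) := (card_union_of_disjoint
          ((disjoint_shadow_of_isAntichain hanti (filter_subset _ _)).mono_left
            (filter_subset _ _))).symm

theorem card_le_choose_of_isAntichain_of_le_card (hm : #U + 1 ≤ 2 * m) (hℱ : ℱ ⊆ U.powerset)
    (hanti : IsAntichain (· ⊆ ·) (ℱ : Set (Finset α))) (hℱm : ∀ A ∈ ℱ, m ≤ #A) :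
    #ℱ ≤ (#U).choose m := by
  suffices ∀ k, ∀ ℱ : Finset (Finset α), ℱ ⊆ U.powerset →
      IsAntichain (· ⊆ ·) (ℱ : Set (Finset α)) → (∀ A ∈ ℱ, m ≤ #A ∧ #A ≤ m + k) →
      #ℱ ≤ (#U).choose m from
    this #U ℱ hℱ hanti fun A hA =>
      ⟨hℱm A hA, (card_le_card (mem_powerset.1 (hℱ hA))).trans (Nat.le_add_left _ _)⟩
  intro k
  induction k with
  | zero =>
    intro ℱ hℱ _ hℱm
    rw [← card_powersetCard]
    exact card_le_card fun A hA => mem_powersetCard.2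
      ⟨mem_powerset.1 (hℱ hA), le_antisymm (hℱm A hA).2 (hℱm A hA).1⟩
  | succ k ih =>
    intro ℱ hℱ hanti hℱm
    obtain ⟨ℱ', hℱ', hanti', hℱ'm, hcard⟩ :=
      exists_push_down_top_layer hm (Nat.le_add_right m k) hℱ hanti hℱm
    exact hcard.trans (ih ℱ' hℱ' hanti' hℱ'm)

theorem sdiff_injOn_powerset (U : Finset α) : Set.InjOn (U \ ·) (U.powerset : Set (Finset α)) :=
  fun A hA B hB hAB => by
    rw [← Finset.sdiff_sdiff_eq_self (mem_powerset.1 hA),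
      ← Finset.sdiff_sdiff_eq_self (mem_powerset.1 hB)]
    exact congrArg (U \ ·) hAB

def upShadowWithin (U : Finset α) (𝒢 : Finset (Finset α)) : Finset (Finset α) :=
  (shadow (𝒢.image (U \ ·))).image (U \ ·)

theorem exists_subset_of_mem_upShadowWithin {B : Finset α} (h𝒢 : 𝒢 ⊆ U.powerset)
    (hB : B ∈ upShadowWithin U 𝒢) : B ⊆ U ∧ ∃ A ∈ 𝒢, A ⊆ B ∧ #B = #A + 1 := by
  obtain ⟨C, hC, rfl⟩ := mem_image.1 hB
  obtain ⟨D, hD, x, hx, rfl⟩ := mem_shadow_iff.1 hC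
  obtain ⟨A, hA, rfl⟩ := mem_image.1 hD
  obtain ⟨hxU, hxA⟩ := mem_sdiff.1 hx
  rw [sdiff_erase hxU, Finset.sdiff_sdiff_eq_self (mem_powerset.1 (h𝒢 hA))]
  exact ⟨insert_subset hxU (mem_powerset.1 (h𝒢 hA)), A, hA, subset_insert x A,
    card_insert_of_notMem hxA⟩

theorem disjoint_upShadowWithin_of_isAntichain (hanti : IsAntichain (· ⊆ ·) (ℱ : Set (Finset α)))
    (h𝒢 : 𝒢 ⊆ ℱ) (hℱ : ℱ ⊆ U.powerset) : Disjoint ℱ (upShadowWithin U 𝒢) :=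
  disjoint_left.2 fun B hB hB' => by
    obtain ⟨-, A, hA, hAB, hBA⟩ := exists_subset_of_mem_upShadowWithin (h𝒢.trans hℱ) hB'
    rw [hanti.eq (h𝒢 hA) hB hAB] at hBA
    omega

theorem isAntichain_filter_ne_union_upShadowWithin (hℱ : ℱ ⊆ U.powerset)
    (hanti : IsAntichain (· ⊆ ·) (ℱ : Set (Finset α))) (hℱs : ∀ A ∈ ℱ, s ≤ #A) :
    IsAntichain (· ⊆ ·) (({A ∈ ℱ | #A ≠ s} ∪ upShadowWithin U {A ∈ ℱ | #A = s} :
      Finset (Finset α)) : Set (Finset α)) := by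
  have hℋ : ∀ A ∈ {A ∈ ℱ | #A ≠ s}, A ∈ ℱ ∧ s + 1 ≤ #A := fun A hA => by
    obtain ⟨hA, hAs⟩ := mem_filter.1 hA
    exact ⟨hA, by have := hℱs A hA; omega⟩
  have hup : ∀ B ∈ upShadowWithin U {A ∈ ℱ | #A = s}, #B = s + 1 ∧ ∃ A ∈ ℱ, A ⊆ B ∧ #A = s :=
    fun B hB => by
      obtain ⟨-, A, hA, hAB, hBA⟩ :=
        exists_subset_of_mem_upShadowWithin ((filter_subset _ _).trans hℱ) hB
      obtain ⟨hA, hAs⟩ := mem_filter.1 hA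
      exact ⟨hAs ▸ hBA, A, hA, hAB, hAs⟩
  intro B hB C hC hBC hsub
  simp only [coe_union, Set.mem_union, mem_coe] at hB hC
  rcases hB with hB | hB <;> rcases hC with hC | hC
  · exact hBC (hanti.eq (hℋ B hB).1 (hℋ C hC).1 hsub)
  · exact hBC (eq_of_subset_of_card_le hsub (by rw [(hup C hC).1]; exact (hℋ B hB).2))
  · obtain ⟨-, A, hA, hAB, hAs⟩ := hup B hB
    have := (hℋ C hC).2
    rw [← hanti.eq hA (hℋ C hC).1 (hAB.trans hsub)] at this
    omega
  · exact hBC (eq_of_subset_of_card_le hsub (by rw [(hup B hB).1, (hup C hC).1]))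

end Layers

section Milner

variable {n t s : ℕ} {𝒢 ℱ : Finset (Finset ℕ)}

theorem card_le_card_upShadowWithin (ht : 1 ≤ t) (hs : 2 * s + 1 ≤ n + t)
    (h𝒢 : 𝒢 ⊆ (range n).powerset) (hs𝒢 : (𝒢 : Set (Finset ℕ)).Sized s)
    (h𝒢t : TIntersecting t 𝒢) : #𝒢 ≤ #(upShadowWithin (range n) 𝒢) := by
  set 𝒞 := 𝒢.image (range n \ ·)
  have h𝒞 : 𝒞 ⊆ (range n).powerset := image_subset_iff.2 fun A _ => mem_powerset.2 sdiff_subset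
  have hs𝒞 : (𝒞 : Set (Finset ℕ)).Sized (n - s) := by
    rintro _ hC
    obtain ⟨A, hA, rfl⟩ := mem_image.1 hC
    rw [card_sdiff_of_subset (mem_powerset.1 (h𝒢 hA)), card_range, hs𝒢 hA]
  have h𝒞t : TIntersecting (n + t - 2 * s) 𝒞 := by
    rintro _ hC _ hC'
    obtain ⟨A, hA, rfl⟩ := mem_image.1 hC
    obtain ⟨B, hB, rfl⟩ := mem_image.1 hC'
    have hAB := union_subset (mem_powerset.1 (h𝒢 hA)) (mem_powerset.1 (h𝒢 hB))
    have hunion := card_union_add_card_inter A B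
    have hle := card_le_card hAB
    have hint := h𝒢t A hA B hB
    rw [hs𝒢 hA, hs𝒢 hB] at hunion
    rw [card_range] at hle
    rw [← sdiff_union_distrib, card_sdiff_of_subset hAB, card_range]
    omega
  have hshadow : (shadow 𝒞 : Set (Finset ℕ)) ⊆ (range n).powerset := fun C hC => by
    obtain ⟨D, hD, hCD⟩ := exists_subset_of_mem_shadow hC
    exact mem_powerset.2 (hCD.trans (mem_powerset.1 (h𝒞 hD)))
  calc #𝒢 = #𝒞 := (card_image_of_injOn ((sdiff_injOn_powerset _).mono h𝒢)).symm
    _ ≤ #(shadow 𝒞) := card_le_card_shadow_of_tIntersecting (by omega) (by omega) h𝒞 hs𝒞 h𝒞t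
    _ = #(upShadowWithin (range n) 𝒢) :=
        (card_image_of_injOn ((sdiff_injOn_powerset _).mono hshadow)).symm

theorem exists_push_up_bottom_layer (ht : 1 ≤ t) (hs : 2 * s + 1 ≤ n + t)
    (hℱ : ℱ ⊆ (range n).powerset) (hanti : IsAntichain (· ⊆ ·) (ℱ : Set (Finset ℕ)))
    (hℱt : TIntersecting t ℱ) (hℱs : ∀ A ∈ ℱ, s ≤ #A) :
    ∃ ℱ' : Finset (Finset ℕ), ℱ' ⊆ (range n).powerset ∧ IsAntichain (· ⊆ ·) (ℱ' : Set (Finset ℕ)) ∧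
      TIntersecting t ℱ' ∧ (∀ A ∈ ℱ', s + 1 ≤ #A) ∧ #ℱ ≤ #ℱ' := by
  set 𝒢 := {A ∈ ℱ | #A = s}
  set ℋ := {A ∈ ℱ | #A ≠ s}
  have h𝒢 : 𝒢 ⊆ (range n).powerset := (filter_subset _ _).trans hℱ
  have hup : ∀ B ∈ upShadowWithin (range n) 𝒢, B ⊆ range n ∧ ∃ A ∈ ℱ, A ⊆ B ∧ #B = s + 1 :=
    fun B hB => by
      obtain ⟨hBn, A, hA, hAB, hBA⟩ := exists_subset_of_mem_upShadowWithin h𝒢 hB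
      obtain ⟨hA, hAs⟩ := mem_filter.1 hA
      exact ⟨hBn, A, hA, hAB, hAs ▸ hBA⟩
  refine ⟨ℋ ∪ upShadowWithin (range n) 𝒢, union_subset ((filter_subset _ _).trans hℱ)
    fun B hB => mem_powerset.2 (hup B hB).1,
    isAntichain_filter_ne_union_upShadowWithin hℱ hanti hℱs,
    hℱt.of_forall_exists_subset fun B hB => ?_, fun B hB => ?_, ?_⟩
  · rcases mem_union.1 hB with hB | hB
    · exact ⟨B, (mem_filter.1 hB).1, subset_rfl⟩
    · obtain ⟨-, A, hA, hAB, -⟩ := hup B hB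
      exact ⟨A, hA, hAB⟩
  · rcases mem_union.1 hB with hB | hB
    · obtain ⟨hB, hBs⟩ := mem_filter.1 hB
      have := hℱs B hB
      omega
    · obtain ⟨-, -, -, -, hBs⟩ := hup B hB
      exact hBs.ge
  · calc #ℱ = #ℋ + #𝒢 := by rw [add_comm]; exact (card_filter_add_card_filter_not _).symm
      _ ≤ #ℋ + #(upShadowWithin (range n) 𝒢) := Nat.add_le_add_left
          (card_le_card_upShadowWithin ht hs h𝒢 (fun A hA => (mem_filter.1 hA).2)
            (hℱt.mono (filter_subset _ _))) _
      _ = #(ℋ ∪ upShadowWithin (range n) 𝒢) := (card_union_of_disjoint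
          ((disjoint_upShadowWithin_of_isAntichain hanti (filter_subset _ _) hℱ).mono_left
            (filter_subset _ _))).symm

theorem card_le_choose_of_isAntichain_of_tIntersecting (ht : 1 ≤ t)
    (hℱ : ℱ ⊆ (range n).powerset) (hanti : IsAntichain (· ⊆ ·) (ℱ : Set (Finset ℕ)))
    (hℱt : TIntersecting t ℱ) : #ℱ ≤ n.choose ((n + t + 1) / 2) := by
  have pushed : ∀ s ≤ (n + t + 1) / 2, ∃ ℱ' : Finset (Finset ℕ), ℱ' ⊆ (range n).powerset ∧
      IsAntichain (· ⊆ ·) (ℱ' : Set (Finset ℕ)) ∧ TIntersecting t ℱ' ∧ (∀ A ∈ ℱ', s ≤ #A) ∧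
      #ℱ ≤ #ℱ' := by
    intro s
    induction s with
    | zero => exact fun _ => ⟨ℱ, hℱ, hanti, hℱt, fun _ _ => Nat.zero_le _, le_rfl⟩
    | succ s ih =>
      intro hs
      obtain ⟨ℱ₁, hℱ₁, hanti₁, hℱ₁t, hℱ₁s, hcard₁⟩ := ih (by omega)
      obtain ⟨ℱ₂, hℱ₂, hanti₂, hℱ₂t, hℱ₂s, hcard₂⟩ :=
        exists_push_up_bottom_layer ht (by omega) hℱ₁ hanti₁ hℱ₁t hℱ₁s
      exact ⟨ℱ₂, hℱ₂, hanti₂, hℱ₂t, hℱ₂s, hcard₁.trans hcard₂⟩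
  obtain ⟨ℱ', hℱ', hanti', -, hℱ's, hcard⟩ := pushed _ le_rfl
  have := card_le_choose_of_isAntichain_of_le_card (by rw [card_range]; omega) hℱ' hanti' hℱ's
  rw [card_range] at this
  exact hcard.trans this

end Milner

section Weights

variable {α : Type*} {U : Finset α} {ℱ : Finset (Finset α)} {a : α → ℝ} {w : ℝ}

theorem isAntichain_of_sum_eq (ha : ∀ i ∈ U, 0 < a i) (hℱ : ℱ ⊆ U.powerset)
    (hw : ∀ A ∈ ℱ, ∑ i ∈ A, a i = w) : IsAntichain (· ⊆ ·) (ℱ : Set (Finset α)) := by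
  intro A hA B hB hAB hsub
  obtain ⟨i, hiB, hiA⟩ := exists_of_ssubset (ssubset_of_subset_of_ne hsub hAB)
  have hBU := mem_powerset.1 (hℱ hB)
  have := sum_lt_sum_of_subset hsub hiB hiA (ha i (hBU hiB)) fun j hj _ => (ha j (hBU hj)).le
  rw [hw A hA, hw B hB] at this
  exact this.false

theorem tIntersecting_of_sum_eq [DecidableEq α] {k : ℕ} (ha₀ : ∀ i ∈ U, 0 ≤ a i)
    (ha₁ : ∀ i ∈ U, a i ≤ 1) (hℱ : ℱ ⊆ U.powerset) (hw : ∀ A ∈ ℱ, ∑ i ∈ A, a i = w)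
    (hk : (k : ℝ) - 1 < 2 * w - ∑ i ∈ U, a i) : TIntersecting k ℱ := by
  intro A hA B hB
  have hAU := mem_powerset.1 (hℱ hA)
  have hBU := mem_powerset.1 (hℱ hB)
  have hunion : ∑ i ∈ A ∪ B, a i + ∑ i ∈ A ∩ B, a i = 2 * w := by
    rw [sum_union_inter, hw A hA, hw B hB, two_mul]
  have hU : ∑ i ∈ A ∪ B, a i ≤ ∑ i ∈ U, a i :=
    sum_le_sum_of_subset_of_nonneg (union_subset hAU hBU) fun i hi _ => ha₀ i hi
  have hcard : ∑ i ∈ A ∩ B, a i ≤ #(A ∩ B) := by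
    simpa using sum_le_sum fun i hi => ha₁ i (hAU (mem_inter.1 hi).1)
  have : (k : ℝ) < #(A ∩ B) + 1 := by linarith
  exact_mod_cast Nat.lt_add_one_iff.1 (by exact_mod_cast this)

end Weights

section SignPatterns

-- A sign pattern in `{±1}ⁿ` is encoded by the set of indices carrying `+1`.
def patternSign (P : Finset ℕ) (i : ℕ) : ℝ := if i ∈ P then 1 else -1

variable {n k : ℕ} {b : ℕ → ℝ} {c : ℝ}

theorem symmDiff_filter_neg_subset_range {P : Finset ℕ} (hP : P ⊆ range n) :
    P ∆ {i ∈ range n | b i < 0} ⊆ range n :=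
  symmDiff_subset_union.trans (union_subset hP (filter_subset _ _))

theorem sum_patternSign_mul_eq (hb : ∀ i ∈ range n, b i ≠ 0) {P : Finset ℕ} (hP : P ⊆ range n) :
    ∑ i ∈ range n, patternSign P i * b i =
      2 * ∑ i ∈ P ∆ {i ∈ range n | b i < 0}, |b i| - ∑ i ∈ range n, |b i| := by
  rw [← inter_eq_right.2 (symmDiff_filter_neg_subset_range hP), ← sum_ite_mem, mul_sum,
    ← sum_sub_distrib]
  refine sum_congr rfl fun i hi => ?_
  rcases (hb i hi).lt_or_gt with h | h <;> by_cases hP : i ∈ P <;>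
    simp only [patternSign, hP, hi, h, h.not_gt, ↓reduceIte, mem_symmDiff, mem_filter, and_self,
      and_true, and_false, or_self, or_true, or_false, not_true_eq_false, not_false_eq_true,
      abs_of_neg, abs_of_pos] <;> ring

theorem card_filter_sum_patternSign_mul_eq_le (hk : 1 ≤ k) (hb₀ : ∀ i ∈ range n, b i ≠ 0)
    (hb₁ : ∀ i ∈ range n, |b i| ≤ 1) (hc : (k : ℝ) - 1 < c) :
    #{P ∈ (range n).powerset | ∑ i ∈ range n, patternSign P i * b i = c} ≤
      n.choose ((n + k + 1) / 2) := by
  set N := {i ∈ range n | b i < 0}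
  set 𝒮 := {P ∈ (range n).powerset | ∑ i ∈ range n, patternSign P i * b i = c}
  set ℱ := 𝒮.image (· ∆ N)
  -- flipping the indices of negative weights turns each solution into a set of weight `w`
  set w := (c + ∑ i ∈ range n, |b i|) / 2
  have hℱ : ℱ ⊆ (range n).powerset := image_subset_iff.2 fun P hP =>
    mem_powerset.2 (symmDiff_filter_neg_subset_range (mem_powerset.1 (mem_filter.1 hP).1))
  have hw : ∀ A ∈ ℱ, ∑ i ∈ A, |b i| = w := by
    rintro _ hA
    obtain ⟨P, hP, rfl⟩ := mem_image.1 hA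
    obtain ⟨hP, hPc⟩ := mem_filter.1 hP
    rw [sum_patternSign_mul_eq hb₀ (mem_powerset.1 hP)] at hPc
    simp only [w]
    linarith
  calc #𝒮 = #ℱ := (card_image_of_injective _ (symmDiff_left_injective N)).symm
    _ ≤ n.choose ((n + k + 1) / 2) := card_le_choose_of_isAntichain_of_tIntersecting hk hℱ
        (isAntichain_of_sum_eq (fun i hi => abs_pos.2 (hb₀ i hi)) hℱ hw)
        (tIntersecting_of_sum_eq (fun _ _ => abs_nonneg _) hb₁ hℱ hw
          (by simp only [w]; linarith))

end SignPatterns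

section Direction

variable {E : Type*} [NormedAddCommGroup E] [InnerProductSpace ℝ E]

theorem dense_setOf_inner_ne_zero {v : E} (hv : v ≠ 0) : Dense {u : E | ⟪v, u⟫ ≠ 0} := by
  have hK : {u : E | ⟪v, u⟫ ≠ 0} = ((ℝ ∙ v)ᗮ : Set E)ᶜ := by
    ext u
    simp [Submodule.mem_orthogonal_singleton_iff_inner_right]
  rw [hK, ← interior_eq_empty_iff_dense_compl, ← Set.not_nonempty_iff_eq_empty]
  intro hne
  have hv' : v ∈ (ℝ ∙ v)ᗮ := by
    rw [Submodule.eq_top_of_nonempty_interior' _ hne]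
    exact Submodule.mem_top
  exact hv (inner_self_eq_zero.1 (Submodule.mem_orthogonal_singleton_iff_inner_right.1 hv'))

theorem exists_norm_eq_one_inner_ne_zero_lt_inner {ι : Type*} {s : Finset ι} {v : ι → E}
    (hv : ∀ i ∈ s, v i ≠ 0) {x : E} (hx : x ≠ 0) {c : ℝ} (hc : c < ‖x‖) :
    ∃ u : E, ‖u‖ = 1 ∧ (∀ i ∈ s, ⟪v i, u⟫ ≠ 0) ∧ c < ⟪x, u⟫ := by
  set G := {u : E | c * ‖u‖ < ⟪x, u⟫}
  have hG : IsOpen G := isOpen_lt (by fun_prop) (by fun_prop)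
  have hxG : x ∈ G := by
    rw [show x ∈ G ↔ c * ‖x‖ < ⟪x, x⟫ from Iff.rfl, real_inner_self_eq_norm_sq, sq]
    exact mul_lt_mul_of_pos_right hc (norm_pos_iff.2 hx)
  have hD : Dense (⋂ i ∈ s, {u : E | ⟪v i, u⟫ ≠ 0}) := by
    rw [← Finset.set_biInter_coe, ← Set.sInter_image]
    refine (s.finite_toSet.image _).dense_sInter ?_ ?_ <;> rintro _ ⟨i, hi, rfl⟩
    · exact isOpen_ne_fun (by fun_prop) (by fun_prop)
    · exact dense_setOf_inner_ne_zero (hv i hi)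
  obtain ⟨u, huG, huD⟩ := hD.inter_open_nonempty G hG ⟨x, hxG⟩
  have hu : u ≠ 0 := by
    rintro rfl
    simp [G] at huG
  refine ⟨‖u‖⁻¹ • u, norm_smul_inv_norm hu, fun i hi => ?_, ?_⟩
  · rw [real_inner_smul_right]
    exact mul_ne_zero (inv_ne_zero (norm_ne_zero_iff.2 hu)) (Set.mem_iInter₂.1 huD i hi)
  · rwa [real_inner_smul_right, ← div_eq_inv_mul, lt_div_iff₀ (norm_pos_iff.2 hu)]

end Direction

section Rademacher

variable {Ω : Type*} [MeasurableSpace Ω] {μ : Measure Ω}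

theorem _root_.IsRademacher.ae_eq_one_or_eq_neg_one_s1 [IsProbabilityMeasure μ] {f : Ω → ℝ}
    (hf : IsRademacher μ f) (hmeas : Measurable f) : ∀ᵐ ω ∂μ, f ω = 1 ∨ f ω = -1 := by
  have hdisj : Disjoint {ω | f ω = 1} {ω | f ω = -1} :=
    Set.disjoint_left.2 fun ω (h₁ : f ω = 1) (h₂ : f ω = -1) => by linarith
  have hS : μ ({ω | f ω = 1} ∪ {ω | f ω = -1}) = 1 := by
    rw [measure_union hdisj (hmeas (measurableSet_singleton (-1))), hf.1, hf.2, ENNReal.add_halves]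
  exact (prob_compl_eq_zero_iff ((hmeas (measurableSet_singleton _)).union
    (hmeas (measurableSet_singleton _)))).2 hS

variable {ε : ℕ → Ω → ℝ}

theorem measure_forall_eq_patternSign (hindep : iIndepFun ε μ)
    (hrad : ∀ i, IsRademacher μ (ε i)) (n : ℕ) (P : Finset ℕ) :
    μ {ω | ∀ i ∈ range n, ε i ω = patternSign P i} = (2 ^ n)⁻¹ := by
  have hset : {ω | ∀ i ∈ range n, ε i ω = patternSign P i} =
      ⋂ i ∈ range n, ε i ⁻¹' {patternSign P i} := by
    ext
    simp
  have hhalf : ∀ i, μ (ε i ⁻¹' {patternSign P i}) = 2⁻¹ := fun i => by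
    rw [← one_div]
    unfold patternSign
    split_ifs
    exacts [(hrad i).1, (hrad i).2]
  rw [hset, hindep.measure_inter_preimage_eq_mul _ fun i _ => measurableSet_singleton _,
    prod_congr rfl fun i _ => hhalf i, prod_const, card_range, ENNReal.inv_pow]

theorem measure_sum_smul_eq_le [IsProbabilityMeasure μ] {E : Type*} [AddCommGroup E]
    [Module ℝ E] [DecidableEq E] (hmeas : ∀ i, Measurable (ε i)) (hindep : iIndepFun ε μ)
    (hrad : ∀ i, IsRademacher μ (ε i)) (v : ℕ → E) (x : E) (n : ℕ) :
    μ {ω | ∑ i ∈ range n, ε i ω • v i = x} ≤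
      #{P ∈ (range n).powerset | ∑ i ∈ range n, patternSign P i • v i = x} / 2 ^ n := by
  set 𝒮 := {P ∈ (range n).powerset | ∑ i ∈ range n, patternSign P i • v i = x}
  have hsigns : ∀ᵐ ω ∂μ, ∀ i ∈ range n, ε i ω = 1 ∨ ε i ω = -1 :=
    (Filter.eventually_all_finset _).2 fun i _ => (hrad i).ae_eq_one_or_eq_neg_one_s1 (hmeas i)
  have hcover : ∀ᵐ ω ∂μ, ω ∈ {ω | ∑ i ∈ range n, ε i ω • v i = x} →
      ω ∈ ⋃ P ∈ 𝒮, {ω | ∀ i ∈ range n, ε i ω = patternSign P i} := by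
    filter_upwards [hsigns] with ω hω hωx
    have hP : ∀ i ∈ range n, ε i ω = patternSign {j ∈ range n | ε j ω = 1} i := fun i hi => by
      rcases hω i hi with h | h <;> simp [patternSign, hi, h]
    simp only [Set.mem_iUnion]
    refine ⟨_, mem_filter.2 ⟨mem_powerset.2 (filter_subset _ _), ?_⟩, hP⟩
    exact (sum_congr rfl fun i hi => by rw [hP i hi]).symm.trans hωx
  calc μ {ω | ∑ i ∈ range n, ε i ω • v i = x}
      ≤ μ (⋃ P ∈ 𝒮, {ω | ∀ i ∈ range n, ε i ω = patternSign P i}) := measure_mono_ae hcover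
    _ ≤ ∑ P ∈ 𝒮, μ {ω | ∀ i ∈ range n, ε i ω = patternSign P i} := measure_biUnion_finset_le _ _
    _ = #𝒮 / 2 ^ n := by
      simp_rw [measure_forall_eq_patternSign hindep hrad, sum_const, nsmul_eq_mul, div_eq_mul_inv]

end Rademacher

theorem ceil_natCast_add_natCast_div_two (n k : ℕ) :
    ⌈((n : ℚ) + k) / 2⌉₊ = (n + k + 1) / 2 := by
  rw [← Nat.cast_add]
  obtain ⟨j, hj | hj⟩ := Nat.even_or_odd' (n + k) <;> rw [hj]
  · rw [Nat.cast_mul, Nat.cast_two, mul_div_cancel_left₀ _ two_ne_zero, Nat.ceil_natCast]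
    omega
  · rw [Nat.ceil_eq_iff (by omega), show (2 * j + 1 + 1) / 2 = j + 1 by omega]
    push_cast
    constructor <;> linarith

end LittlewoodOfford

open LittlewoodOfford

theorem littlewood_offord_nonuniform
    {Ω : Type*} [MeasurableSpace Ω] (μ : Measure Ω) [IsProbabilityMeasure μ]
    (d n : ℕ) (v : ℕ → EuclideanSpace ℝ (Fin d))
    (hv0 : ∀ i < n, v i ≠ 0) (hv1 : ∀ i < n, ‖v i‖ ≤ 1)
    (ε : ℕ → Ω → ℝ) (hmeas : ∀ i, Measurable (ε i))
    (hindep : iIndepFun ε μ)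
    (hrad : ∀ i, IsRademacher μ (ε i))
    (x : EuclideanSpace ℝ (Fin d)) (hx : x ≠ 0) :
    μ {ω | ∑ i ∈ Finset.range n, ε i ω • v i = x}
      ≤ (n.choose ⌈((n : ℚ) + ⌈‖x‖⌉₊) / 2⌉₊ : ENNReal) / 2 ^ n := by
  classical
  set k := ⌈‖x‖⌉₊
  have hk : 1 ≤ k := Nat.one_le_iff_ne_zero.2 (Nat.ceil_pos.2 (norm_pos_iff.2 hx)).ne'
  have hkx : (k : ℝ) - 1 < ‖x‖ := by linarith [Nat.ceil_lt_add_one (norm_nonneg x)]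
  obtain ⟨u, hu, hvu, hxu⟩ := exists_norm_eq_one_inner_ne_zero_lt_inner
    (s := range n) (fun i hi => hv0 i (mem_range.1 hi)) hx hkx
  have hb : ∀ i ∈ range n, |⟪v i, u⟫| ≤ 1 := fun i hi =>
    (abs_real_inner_le_norm _ _).trans (by rw [hu, mul_one]; exact hv1 i (mem_range.1 hi))
  calc μ {ω | ∑ i ∈ range n, ε i ω • v i = x}
      ≤ #{P ∈ (range n).powerset | ∑ i ∈ range n, patternSign P i • v i = x} / 2 ^ n :=
        measure_sum_smul_eq_le hmeas hindep hrad v x n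
    _ ≤ #{P ∈ (range n).powerset |
          ∑ i ∈ range n, patternSign P i * ⟪v i, u⟫ = ⟪x, u⟫} / 2 ^ n := by
        gcongr
        rintro rfl
        simp only [sum_inner, real_inner_smul_left]
    _ ≤ n.choose ((n + k + 1) / 2) / 2 ^ n := by
        gcongr
        exact_mod_cast card_filter_sum_patternSign_mul_eq_le hk hvu hb hxu
    _ = n.choose ⌈((n : ℚ) + k) / 2⌉₊ / 2 ^ n := by
        rw [ceil_natCast_add_natCast_div_two]
end

section
/- Let $\mathcal{F}$ be a family of subsets of $[n] = \{1,\ldots,n\}$ that is an antichain (no member contains another) and is $k$-intersecting (any two members, including a member with itself, intersect in at least $k$ elements). Then $|\mathcal{F}| \le \binom{n}{t}$ where $t = \lceil (n+k)/2 \rceil$. (Milner's theorem) -/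
/-!
Push the antichain up, one layer at a time, to the level `t = ⌈(n + k) / 2⌉`. While the smallest
sets have size `s < t`, replace that layer by its upper shadow: the result is still a
`k`-intersecting antichain, and it is no smaller, because the complements of the layer form an
intersecting family of `(n - s)`-sets, whose shadow is at least as large by Katona's intersecting
shadow theorem (proved by shifting and splitting off the largest element). Once all sets have size
at least `t ≥ n / 2`, the LYM inequality bounds the antichain by `C(n, t)`.
-/

open Finset UV
open scoped FinsetFamily

namespace Finset

variable {α β : Type*} [DecidableEq α]

lemma shadow_map [DecidableEq β] (f : α ↪ β) (𝒜 : Finset (Finset α)) :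
    ∂ (𝒜.map (mapEmbedding f).toEmbedding) = (∂ 𝒜).map (mapEmbedding f).toEmbedding := by
  ext t
  simp only [mem_shadow_iff, mem_map, RelEmbedding.coe_toEmbedding, mapEmbedding_apply]
  constructor
  · rintro ⟨_, ⟨A, hA, rfl⟩, y, hy, rfl⟩
    obtain ⟨x, hx, rfl⟩ := mem_map.1 hy
    exact ⟨A.erase x, ⟨A, hA, x, hx, rfl⟩, map_erase f A x⟩
  · rintro ⟨_, ⟨A, hA, x, hx, rfl⟩, rfl⟩
    exact ⟨A.map f, ⟨A, hA, rfl⟩, f x, mem_map_of_mem f hx, (map_erase f A x).symm⟩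

lemma shadow_nonMemberSubfamily_subset (a : α) (𝒜 : Finset (Finset α)) :
    ∂ (𝒜.nonMemberSubfamily a) ⊆ (∂ 𝒜).nonMemberSubfamily a := by
  intro S hS
  obtain ⟨A, hA, x, hx, rfl⟩ := mem_shadow_iff.1 hS
  rw [mem_nonMemberSubfamily] at hA ⊢
  exact ⟨erase_mem_shadow hA.1 hx, fun h ↦ hA.2 (mem_of_mem_erase h)⟩

lemma shadow_memberSubfamily_subset (a : α) (𝒜 : Finset (Finset α)) :
    ∂ (𝒜.memberSubfamily a) ⊆ (∂ 𝒜).memberSubfamily a := by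
  intro S hS
  obtain ⟨A, hA, x, hx, rfl⟩ := mem_shadow_iff.1 hS
  rw [mem_memberSubfamily] at hA ⊢
  have hxa : x ≠ a := ne_of_mem_of_not_mem hx hA.2
  refine ⟨?_, fun h ↦ hA.2 (mem_of_mem_erase h)⟩
  rw [← erase_insert_of_ne hxa.symm]
  exact erase_mem_shadow hA.1 (mem_insert_of_mem hx)

lemma card_shadow_memberSubfamily_add_card_shadow_nonMemberSubfamily_le
    (a : α) (𝒜 : Finset (Finset α)) :
    #(∂ (𝒜.memberSubfamily a)) + #(∂ (𝒜.nonMemberSubfamily a)) ≤ #(∂ 𝒜) := by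
  rw [← card_memberSubfamily_add_card_nonMemberSubfamily a (∂ 𝒜)]
  exact add_le_add (card_le_card (shadow_memberSubfamily_subset a 𝒜))
    (card_le_card (shadow_nonMemberSubfamily_subset a 𝒜))

lemma nonMemberSubfamily_subset_powerset {a : α} {s : Finset α}
    {𝒜 : Finset (Finset α)} (h𝒜 : 𝒜 ⊆ (insert a s).powerset) :
    𝒜.nonMemberSubfamily a ⊆ s.powerset := fun A hA ↦ by
  rw [mem_nonMemberSubfamily] at hA
  exact mem_powerset.2 ((subset_insert_iff_of_notMem hA.2).1 (mem_powerset.1 (h𝒜 hA.1)))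

lemma memberSubfamily_subset_powerset {a : α} {s : Finset α}
    {𝒜 : Finset (Finset α)} (h𝒜 : 𝒜 ⊆ (insert a s).powerset) :
    𝒜.memberSubfamily a ⊆ s.powerset := fun A hA ↦ by
  rw [mem_memberSubfamily] at hA
  exact mem_powerset.2 ((subset_insert_iff_of_notMem hA.2).1
    ((subset_insert a A).trans (mem_powerset.1 (h𝒜 hA.1))))

lemma _root_.Set.Sized.memberSubfamily {a : α} {r : ℕ}
    {𝒜 : Finset (Finset α)} (hr : (𝒜 : Set (Finset α)).Sized r) :
    (𝒜.memberSubfamily a : Set (Finset α)).Sized (r - 1) := fun A hA ↦ by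
  rw [mem_coe, mem_memberSubfamily] at hA
  have := hr hA.1
  rw [card_insert_of_notMem hA.2] at this
  omega

lemma forall_le_card_inter_of_forall_exists_subset {k : ℕ} {𝒜 ℬ : Finset (Finset α)}
    (hk : ∀ A ∈ 𝒜, ∀ B ∈ 𝒜, k ≤ #(A ∩ B)) (hℬ : ∀ B ∈ ℬ, ∃ A ∈ 𝒜, A ⊆ B) :
    ∀ A ∈ ℬ, ∀ B ∈ ℬ, k ≤ #(A ∩ B) := by
  intro A hA B hB
  obtain ⟨A₀, hA₀, hA₀A⟩ := hℬ A hA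
  obtain ⟨B₀, hB₀, hB₀B⟩ := hℬ B hB
  exact (hk A₀ hA₀ B₀ hB₀).trans (card_le_card (inter_subset_inter hA₀A hB₀B))

end Finset

namespace UV

variable {α : Type*} [DecidableEq α] {i j : α} {A : Finset α} {𝒜 : Finset (Finset α)}

lemma compress_singleton_of_notMem_of_mem (hi : i ∉ A) (hj : j ∈ A) :
    compress {i} {j} A = insert i (A.erase j) := by
  rw [compress_of_disjoint_of_le (disjoint_singleton_left.2 hi) (singleton_subset_iff.2 hj),
    sup_eq_union, union_comm, ← insert_eq, sdiff_singleton_eq_erase,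
    erase_insert_of_ne (ne_of_mem_of_not_mem hj hi).symm]

lemma of_mem_compression_singleton {A' : Finset α} (h : A' ∈ 𝓒 {i} {j} 𝒜) :
    A' ∈ 𝒜 ∧ compress {i} {j} A' ∈ 𝒜 ∨ ∃ A ∈ 𝒜, i ∉ A ∧ j ∈ A ∧ A' = insert i (A.erase j) := by
  refine (mem_compression.1 h).imp id fun ⟨hA', A, hA, hAA'⟩ ↦ ⟨A, hA, ?_⟩
  by_cases hij : i ∉ A ∧ j ∈ A
  · exact ⟨hij.1, hij.2, by rw [← hAA', compress_singleton_of_notMem_of_mem hij.1 hij.2]⟩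
  · rw [compress, if_neg (by simpa using hij)] at hAA'
    exact absurd (hAA' ▸ hA) hA'

lemma _root_.Set.Intersecting.uvCompression_singleton
    (h𝒜 : (𝒜 : Set (Finset α)).Intersecting) : (𝓒 {i} {j} 𝒜 : Set (Finset α)).Intersecting := by
  have key : ∀ A ∈ 𝒜, compress {i} {j} A ∈ 𝒜 → ∀ B ∈ 𝒜, i ∉ B → j ∈ B →
      ¬Disjoint A (insert i (B.erase j)) := by
    intro A hA hcA B hB hiB hjB
    rw [not_disjoint_iff]
    by_cases hiA : i ∈ A
    · exact ⟨i, hiA, mem_insert_self _ _⟩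
    obtain ⟨x, hxA, hxB, hxj⟩ : ∃ x ∈ A, x ∈ B ∧ x ≠ j := by
      by_cases hjA : j ∈ A
      · rw [compress_singleton_of_notMem_of_mem hiA hjA] at hcA
        obtain ⟨x, hxA, hxB⟩ := not_disjoint_iff.1 (h𝒜 hcA hB)
        obtain ⟨hxj, hxA⟩ :=
          mem_erase.1 ((mem_insert.1 hxA).resolve_left (ne_of_mem_of_not_mem hxB hiB))
        exact ⟨x, hxA, hxB, hxj⟩
      · obtain ⟨x, hxA, hxB⟩ := not_disjoint_iff.1 (h𝒜 hA hB)
        exact ⟨x, hxA, hxB, ne_of_mem_of_not_mem hxA hjA⟩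
    exact ⟨x, hxA, mem_insert_of_mem (mem_erase.2 ⟨hxj, hxB⟩)⟩
  intro A' hA' B' hB'
  rcases of_mem_compression_singleton hA' with ⟨hA, hcA⟩ | ⟨A, hA, hiA, hjA, rfl⟩ <;>
    rcases of_mem_compression_singleton hB' with ⟨hB, hcB⟩ | ⟨B, hB, hiB, hjB, rfl⟩
  · exact h𝒜 hA hB
  · exact key _ hA hcA B hB hiB hjB
  · exact fun h ↦ key _ hB hcB A hA hiA hjA h.symm
  · exact not_disjoint_iff.2 ⟨i, mem_insert_self _ _, mem_insert_self _ _⟩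

lemma card_shadow_compression_singleton_le (i j : α) (𝒜 : Finset (Finset α)) :
    #(∂ (𝓒 {i} {j} 𝒜)) ≤ #(∂ 𝒜) :=
  card_shadow_compression_le _ _ fun x hx ↦
    ⟨j, mem_singleton_self j, by simpa [mem_singleton.1 hx] using isCompressed_self ∅ 𝒜⟩

lemma compression_singleton_subset_powerset_range {m i j : ℕ} (hij : i < j)
    {𝒜 : Finset (Finset ℕ)} (h𝒜 : 𝒜 ⊆ (range m).powerset) :
    𝓒 {i} {j} 𝒜 ⊆ (range m).powerset := by
  intro A' hA'
  rcases of_mem_compression_singleton hA' with ⟨hA, -⟩ | ⟨A, hA, -, hjA, rfl⟩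
  · exact h𝒜 hA
  · have hA := mem_powerset.1 (h𝒜 hA)
    refine mem_powerset.2 (insert_subset ?_ ((erase_subset j A).trans hA))
    exact mem_range.2 (hij.trans (mem_range.1 (hA hjA)))

end UV

namespace Finset

lemma exists_eq_map_valEmbedding {m : ℕ} {𝒜 : Finset (Finset ℕ)} (h𝒜 : 𝒜 ⊆ (range m).powerset) :
    ∃ ℬ : Finset (Finset (Fin m)), 𝒜 = ℬ.map (mapEmbedding Fin.valEmbedding).toEmbedding := by
  have : 𝒜 ⊆ univ.map (mapEmbedding Fin.valEmbedding).toEmbedding := fun A hA ↦ by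
    have hA : ∀ x ∈ A, x < m := fun x hx ↦ mem_range.1 (mem_powerset.1 (h𝒜 hA) hx)
    exact mem_map.2 ⟨A.attachFin hA, mem_univ _, by simp⟩
  simpa using subset_map_iff.1 this

lemma card_le_card_shadow_of_lt_two_mul {m r : ℕ} {𝒜 : Finset (Finset ℕ)}
    (h𝒜 : 𝒜 ⊆ (range m).powerset) (hr : (𝒜 : Set (Finset ℕ)).Sized r) (hm : m < 2 * r) :
    #𝒜 ≤ #(∂ 𝒜) := by
  obtain ⟨ℬ, rfl⟩ := exists_eq_map_valEmbedding h𝒜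
  rw [shadow_map, card_map, card_map]
  have hℬ : (ℬ : Set (Finset (Fin m))).Sized r := fun B hB ↦ by
    simpa using hr (mem_map_of_mem _ hB)
  have := local_lubell_yamamoto_meshalkin_inequality_mul hℬ
  rw [Fintype.card_fin] at this
  exact le_of_mul_le_mul_right (this.trans (Nat.mul_le_mul_left _ (by omega))) (by omega)

def shiftWeight (𝒜 : Finset (Finset ℕ)) : ℕ := ∑ A ∈ 𝒜, ∑ x ∈ A, x

lemma shiftWeight_compression_lt {i j : ℕ} (hij : i < j) {𝒜 : Finset (Finset ℕ)}
    (h : 𝓒 {i} {j} 𝒜 ≠ 𝒜) : shiftWeight (𝓒 {i} {j} 𝒜) < shiftWeight 𝒜 := by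
  set moved := {A ∈ 𝒜 | compress {i} {j} A ∉ 𝒜}
  have hsplit : {A ∈ 𝒜 | compress {i} {j} A ∈ 𝒜} ∪ moved = 𝒜 := filter_union_filter_not_eq _ _
  have hmoved : moved.Nonempty := by
    contrapose! h
    rw [compression, filter_image]
    change _ ∪ moved.image _ = _
    rw [h, image_empty, union_empty]
    rwa [h, union_empty] at hsplit
  rw [shiftWeight, shiftWeight, compression, sum_union compress_disjoint]
  conv_rhs => rw [← hsplit]
  rw [sum_union (disjoint_filter_filter_not _ _ _), add_lt_add_iff_left, filter_image,
    sum_image compress_injOn]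
  refine sum_lt_sum_of_nonempty hmoved fun A hA ↦ ?_
  obtain ⟨hA, hcA⟩ := mem_filter.1 hA
  have hij' : i ∉ A ∧ j ∈ A := by
    by_contra hij'
    rw [compress, if_neg (by simpa using hij')] at hcA
    exact hcA hA
  rw [compress_singleton_of_notMem_of_mem hij'.1 hij'.2,
    sum_insert fun h ↦ hij'.1 (mem_of_mem_erase h), ← sum_erase_add _ _ hij'.2]
  omega

def IsShifted (𝒜 : Finset (Finset ℕ)) : Prop := ∀ ⦃i j : ℕ⦄, i < j → IsCompressed {i} {j} 𝒜

lemma IsShifted.insert_erase_mem {𝒜 : Finset (Finset ℕ)} (h𝒜 : IsShifted 𝒜) {A : Finset ℕ}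
    (hA : A ∈ 𝒜) {i j : ℕ} (hij : i < j) (hi : i ∉ A) (hj : j ∈ A) : insert i (A.erase j) ∈ 𝒜 := by
  rw [← compress_singleton_of_notMem_of_mem hi hj, ← h𝒜 hij]
  exact compress_mem_compression hA

theorem exists_isShifted {P : Finset (Finset ℕ) → Prop}
    (hP : ∀ ⦃i j : ℕ⦄ ⦃𝒜 : Finset (Finset ℕ)⦄, i < j → P 𝒜 → P (𝓒 {i} {j} 𝒜))
    (𝒜 : Finset (Finset ℕ)) (h𝒜 : P 𝒜) : ∃ ℬ, IsShifted ℬ ∧ P ℬ := by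
  by_cases hs : IsShifted 𝒜
  · exact ⟨𝒜, hs, h𝒜⟩
  obtain ⟨i, j, hij, hc⟩ : ∃ i j, i < j ∧ 𝓒 {i} {j} 𝒜 ≠ 𝒜 := by
    simpa [IsShifted, IsCompressed] using hs
  have := shiftWeight_compression_lt hij hc
  exact exists_isShifted hP _ (hP hij h𝒜)
termination_by shiftWeight 𝒜

/-- If two traces were disjoint, some `i < p` would lie outside both sets, and shifting `p` to `i`
in one of them would produce a member disjoint from the other. -/
lemma IsShifted.intersecting_memberSubfamily {p r : ℕ} {𝒜 : Finset (Finset ℕ)}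
    (hs : IsShifted 𝒜) (h𝒜 : 𝒜 ⊆ (range (p + 1)).powerset) (hr : (𝒜 : Set (Finset ℕ)).Sized r)
    (hpr : 2 * r ≤ p + 1) (hI : (𝒜 : Set (Finset ℕ)).Intersecting) :
    (𝒜.memberSubfamily p : Set (Finset ℕ)).Intersecting := by
  intro A hA B hB hAB
  have hAr := hr.memberSubfamily hA
  have hBr := hr.memberSubfamily hB
  rw [mem_coe, mem_memberSubfamily] at hA hB
  have hcard : #(insert p (A ∪ B)) < #(range (p + 1)) := by
    have := card_insert_le p (A ∪ B)
    rw [card_union_of_disjoint hAB, hAr, hBr] at this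
    have := hr hA.1
    rw [card_insert_of_notMem hA.2] at this
    rw [card_range]
    omega
  obtain ⟨i, hi, hiAB⟩ := exists_mem_notMem_of_card_lt_card hcard
  simp only [mem_insert, mem_union, not_or] at hiAB
  have hip : i < p := lt_of_le_of_ne (Nat.lt_succ_iff.1 (mem_range.1 hi)) hiAB.1
  have hiA : insert i A ∈ 𝒜 := by
    simpa [erase_insert hA.2] using
      hs.insert_erase_mem hA.1 hip (by simp [hiAB.1, hiAB.2.1]) (mem_insert_self p A)
  obtain ⟨x, hxA, hxB⟩ := not_disjoint_iff.1 (hI hiA hB.1)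
  rcases mem_insert.1 hxA with rfl | hxA
  · exact (mem_insert.1 hxB).elim hiAB.1 hiAB.2.2
  · rcases mem_insert.1 hxB with rfl | hxB
    · exact hA.2 hxA
    · exact disjoint_left.1 hAB hxA hxB

theorem card_le_card_shadow_of_subset_powerset_range {m r : ℕ} {𝒜 : Finset (Finset ℕ)}
    (h𝒜 : 𝒜 ⊆ (range m).powerset) (hr : (𝒜 : Set (Finset ℕ)).Sized r)
    (hI : (𝒜 : Set (Finset ℕ)).Intersecting) : #𝒜 ≤ #(∂ 𝒜) := by
  induction m using Nat.strong_induction_on generalizing r 𝒜 with | _ m ih =>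
  rcases lt_or_ge m (2 * r) with hm | hm
  · exact card_le_card_shadow_of_lt_two_mul h𝒜 hr hm
  obtain ⟨ℬ, hs, hℬ, hℬr, hℬI, hcard, hshadow⟩ := exists_isShifted
    (P := fun ℬ ↦ ℬ ⊆ (range m).powerset ∧ (ℬ : Set (Finset ℕ)).Sized r ∧
      (ℬ : Set (Finset ℕ)).Intersecting ∧ #ℬ = #𝒜 ∧ #(∂ ℬ) ≤ #(∂ 𝒜))
    (fun i j ℬ hij ⟨hℬ, hℬr, hℬI, hcard, hshadow⟩ ↦
      ⟨compression_singleton_subset_powerset_range hij hℬ, hℬr.uvCompression rfl,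
        hℬI.uvCompression_singleton, (card_compression _ _ _).trans hcard,
        (card_shadow_compression_singleton_le i j ℬ).trans hshadow⟩)
    𝒜 ⟨h𝒜, hr, hI, rfl, le_rfl⟩
  rw [← hcard]
  refine le_trans ?_ hshadow
  rcases ℬ.eq_empty_or_nonempty with rfl | ⟨B, hB⟩
  · simp
  have hr0 : 0 < r := hℬr hB ▸ card_pos.2 (nonempty_iff_ne_empty.2 (hℬI.ne_bot hB))
  obtain ⟨p, rfl⟩ : ∃ p, m = p + 1 := ⟨m - 1, by omega⟩
  have hℬ' : ℬ ⊆ (insert p (range p)).powerset := range_add_one (n := p) ▸ hℬ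
  calc #ℬ = #(ℬ.memberSubfamily p) + #(ℬ.nonMemberSubfamily p) :=
        (card_memberSubfamily_add_card_nonMemberSubfamily p ℬ).symm
    _ ≤ #(∂ (ℬ.memberSubfamily p)) + #(∂ (ℬ.nonMemberSubfamily p)) := add_le_add
        (ih p p.lt_succ_self (memberSubfamily_subset_powerset hℬ') hℬr.memberSubfamily
          (hs.intersecting_memberSubfamily hℬ hℬr hm hℬI))
        (ih p p.lt_succ_self (nonMemberSubfamily_subset_powerset hℬ')
          (hℬr.mono (filter_subset _ _)) (hℬI.mono (filter_subset _ _)))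
    _ ≤ #(∂ ℬ) := card_shadow_memberSubfamily_add_card_shadow_nonMemberSubfamily_le p ℬ

variable {α : Type*} [DecidableEq α] [Fintype α]

/-- **Katona's intersecting shadow theorem**. -/
theorem _root_.Set.Intersecting.card_le_card_shadow {r : ℕ} {𝒜 : Finset (Finset α)}
    (hI : (𝒜 : Set (Finset α)).Intersecting) (hr : (𝒜 : Set (Finset α)).Sized r) :
    #𝒜 ≤ #(∂ 𝒜) := by
  let e : α ↪ ℕ := (Fintype.equivFin α).toEmbedding.trans Fin.valEmbedding
  have h𝒜 : 𝒜.map (mapEmbedding e).toEmbedding ⊆ (range (Fintype.card α)).powerset := by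
    simp only [subset_iff, mem_map, mem_powerset, mem_range, forall_exists_index, and_imp,
      RelEmbedding.coe_toEmbedding, mapEmbedding_apply]
    rintro _ A - rfl _ hx
    obtain ⟨x, -, rfl⟩ := mem_map.1 hx
    exact ((Fintype.equivFin α) x).isLt
  have hr' : (𝒜.map (mapEmbedding e).toEmbedding : Set (Finset ℕ)).Sized r := by
    simpa [Set.Sized] using hr
  have hI' : (𝒜.map (mapEmbedding e).toEmbedding : Set (Finset ℕ)).Intersecting := by
    simpa [Set.Intersecting] using hI
  simpa [shadow_map] using card_le_card_shadow_of_subset_powerset_range h𝒜 hr' hI'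

/-- Complementation turns a `k`-intersecting family of `s`-sets into an intersecting one, whose
shadow is the complement of the upper shadow. -/
theorem card_le_card_upShadow {k s : ℕ} {𝒜 : Finset (Finset α)}
    (hs : (𝒜 : Set (Finset α)).Sized s) (hk : ∀ A ∈ 𝒜, ∀ B ∈ 𝒜, k ≤ #(A ∩ B))
    (hsk : 2 * s < Fintype.card α + k) : #𝒜 ≤ #(∂⁺ 𝒜) := by
  have hI : (𝒜ᶜˢ : Set (Finset α)).Intersecting := by
    intro A hA B hB
    rw [mem_coe, mem_compls] at hA hB
    rw [not_disjoint_iff_nonempty_inter, ← card_pos, ← compl_compl (A ∩ B), compl_inter,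
      card_compl]
    have := card_union_add_card_inter Aᶜ Bᶜ
    have := card_le_univ (Aᶜ ∪ Bᶜ)
    have := hk _ hA _ hB
    have := hs hA
    have := hs hB
    omega
  simpa using hI.card_le_card_shadow hs.compls

/-- Pushing up the bottom layer: `ℬ` is `𝒜` with `𝒜 # s` replaced by its upper shadow. -/
lemma exists_pushUp {k s : ℕ} {𝒜 : Finset (Finset α)}
    (h𝒜 : IsAntichain (· ⊆ ·) (𝒜 : Set (Finset α))) (hk : ∀ A ∈ 𝒜, ∀ B ∈ 𝒜, k ≤ #(A ∩ B))
    (hs : ∀ A ∈ 𝒜, s ≤ #A) (hsk : 2 * s < Fintype.card α + k) :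
    ∃ ℬ : Finset (Finset α), IsAntichain (· ⊆ ·) (ℬ : Set (Finset α)) ∧
      (∀ A ∈ ℬ, ∀ B ∈ ℬ, k ≤ #(A ∩ B)) ∧ #𝒜 ≤ #ℬ ∧ ∀ B ∈ ℬ, s + 1 ≤ #B := by
  have hup_card : ∀ B ∈ ∂⁺ (𝒜 # s), #B = s + 1 := fun B hB ↦ sized_slice.upShadow hB
  have hup_sub : ∀ B ∈ ∂⁺ (𝒜 # s), ∃ A ∈ 𝒜, A ⊆ B := fun B hB ↦
    (exists_subset_of_mem_upShadow hB).imp fun A hA ↦ ⟨slice_subset hA.1, hA.2⟩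
  have hrest : ∀ B ∈ 𝒜 \ 𝒜 # s, B ∈ 𝒜 ∧ s + 1 ≤ #B := fun B hB ↦ by
    rw [mem_sdiff, mem_slice] at hB
    have := hs B hB.1
    exact ⟨hB.1, by grind⟩
  have hcard : ∀ B ∈ (𝒜 \ 𝒜 # s) ∪ ∂⁺ (𝒜 # s), s + 1 ≤ #B := by
    simp only [mem_union]
    rintro B (hB | hB)
    exacts [(hrest B hB).2, (hup_card B hB).ge]
  have hsub : ∀ B ∈ (𝒜 \ 𝒜 # s) ∪ ∂⁺ (𝒜 # s), ∃ A ∈ 𝒜, A ⊆ B := by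
    simp only [mem_union]
    rintro B (hB | hB)
    exacts [⟨B, (hrest B hB).1, subset_rfl⟩, hup_sub B hB]
  refine ⟨(𝒜 \ 𝒜 # s) ∪ ∂⁺ (𝒜 # s), fun X hX Y hY hXY hXYs ↦ ?_,
    forall_le_card_inter_of_forall_exists_subset hk hsub, ?_, hcard⟩
  · have hlt : #X < #Y := card_lt_card (ssubset_of_subset_of_ne hXYs hXY)
    have hY : Y ∈ 𝒜 := by
      rcases mem_union.1 hY with hY | hY
      · exact (hrest Y hY).1
      · exact absurd (hup_card Y hY) (by grind [hcard X hX])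
    obtain ⟨A, hA, hAX⟩ := hsub X hX
    exact h𝒜 hA hY (by grind [card_le_card hAX]) (hAX.trans hXYs)
  · have hdisj : Disjoint (𝒜 \ 𝒜 # s) (∂⁺ (𝒜 # s)) := disjoint_left.2 fun B hB hB' ↦ by
      obtain ⟨A, hA, hAB⟩ := exists_subset_of_mem_upShadow hB'
      rw [mem_slice] at hA
      exact h𝒜 hA.1 (hrest B hB).1 (by grind [hup_card B hB']) hAB
    have := card_le_card_upShadow sized_slice
      (fun A hA B hB ↦ hk A (slice_subset hA) B (slice_subset hB)) hsk
    rw [card_union_of_disjoint hdisj, card_sdiff_of_subset slice_subset]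
    have := card_le_card (slice_subset (𝒜 := 𝒜) (r := s))
    omega

lemma exists_antichain_forall_le_card {k t : ℕ} {𝒜 : Finset (Finset α)}
    (h𝒜 : IsAntichain (· ⊆ ·) (𝒜 : Set (Finset α))) (hk : ∀ A ∈ 𝒜, ∀ B ∈ 𝒜, k ≤ #(A ∩ B))
    (ht : 2 * t ≤ Fintype.card α + k + 1) :
    ∃ ℬ : Finset (Finset α), IsAntichain (· ⊆ ·) (ℬ : Set (Finset α)) ∧ #𝒜 ≤ #ℬ ∧
      ∀ B ∈ ℬ, t ≤ #B := by
  suffices ∀ s ≤ t, ∃ ℬ : Finset (Finset α), IsAntichain (· ⊆ ·) (ℬ : Set (Finset α)) ∧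
      (∀ A ∈ ℬ, ∀ B ∈ ℬ, k ≤ #(A ∩ B)) ∧ #𝒜 ≤ #ℬ ∧ ∀ B ∈ ℬ, s ≤ #B by
    obtain ⟨ℬ, hℬ, -, hcard, hℬt⟩ := this t le_rfl
    exact ⟨ℬ, hℬ, hcard, hℬt⟩
  intro s hst
  induction s with
  | zero => exact ⟨𝒜, h𝒜, hk, le_rfl, fun _ _ ↦ Nat.zero_le _⟩
  | succ s ih =>
    obtain ⟨ℬ, hℬ, hℬk, hcard, hℬs⟩ := ih (by omega)
    obtain ⟨𝒞, h𝒞, h𝒞k, hcard', h𝒞s⟩ := exists_pushUp hℬ hℬk hℬs (by omega)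
    exact ⟨𝒞, h𝒞, h𝒞k, hcard.trans hcard', h𝒞s⟩

end Finset

lemma Nat.choose_le_choose_of_le_two_mul {n t r : ℕ} (hn : n ≤ 2 * t) (htr : t ≤ r) :
    n.choose r ≤ n.choose t := by
  induction r, htr using Nat.le_induction with
  | base => exact le_rfl
  | succ r htr ih =>
    refine le_trans (Nat.le_of_mul_le_mul_right ?_ r.succ_pos) ih
    rw [Nat.choose_succ_right_eq]
    exact Nat.mul_le_mul_left _ (by omega)

lemma IsAntichain.card_le_choose_of_forall_le_card {α : Type*} [Fintype α] {t : ℕ}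
    {𝒜 : Finset (Finset α)} (h𝒜 : IsAntichain (· ⊆ ·) (𝒜 : Set (Finset α)))
    (ht : Fintype.card α ≤ 2 * t) (h𝒜t : ∀ A ∈ 𝒜, t ≤ #A) :
    #𝒜 ≤ (Fintype.card α).choose t := by
  rcases 𝒜.eq_empty_or_nonempty with rfl | ⟨A₀, hA₀⟩
  · simp
  have hpos : 0 < (Fintype.card α).choose t :=
    Nat.choose_pos ((h𝒜t A₀ hA₀).trans (card_le_univ A₀))
  have hle : (#𝒜 : ℚ) / (Fintype.card α).choose t ≤ 1 := calc
    (#𝒜 : ℚ) / (Fintype.card α).choose t = ∑ _A ∈ 𝒜, ((Fintype.card α).choose t : ℚ)⁻¹ := by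
      simp [div_eq_mul_inv]
    _ ≤ ∑ A ∈ 𝒜, ((Fintype.card α).choose #A : ℚ)⁻¹ := sum_le_sum fun A hA ↦
      inv_anti₀ (by exact_mod_cast Nat.choose_pos (card_le_univ A))
        (by exact_mod_cast Nat.choose_le_choose_of_le_two_mul ht (h𝒜t A hA))
    _ ≤ 1 := lubell_yamamoto_meshalkin_inequality_sum_inv_choose h𝒜
  exact_mod_cast (div_le_one (by exact_mod_cast hpos)).1 hle

lemma Nat.ceil_cast_div_two (a : ℕ) : ⌈(a : ℚ) / 2⌉₊ = (a + 1) / 2 := by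
  rcases Nat.even_or_odd' a with ⟨q, rfl | rfl⟩
  · push_cast
    rw [show (2 * (q : ℚ)) / 2 = q by ring, Nat.ceil_natCast]
    omega
  · rw [Nat.ceil_eq_iff (by omega)]
    push_cast
    constructor
    · rw [show (2 * q + 1 + 1) / 2 - 1 = q by omega]
      linarith
    · rw [show (2 * q + 1 + 1) / 2 = q + 1 by omega]
      push_cast
      linarith

theorem milner_intersecting_antichain (n k : ℕ) (F : Finset (Finset (Fin n)))
    (hanti : IsAntichain (· ⊆ ·) (F : Set (Finset (Fin n))))
    (hint : ∀ A ∈ F, ∀ B ∈ F, k ≤ (A ∩ B).card) :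
    F.card ≤ n.choose ⌈((n : ℚ) + k) / 2⌉₊ := by
  have ht : ⌈((n : ℚ) + k) / 2⌉₊ = (n + k + 1) / 2 := by
    exact_mod_cast Nat.ceil_cast_div_two (n + k)
  rw [ht]
  obtain ⟨G, hG, hFG, hGt⟩ := exists_antichain_forall_le_card (t := (n + k + 1) / 2) hanti hint
    (by rw [Fintype.card_fin]; omega)
  exact hFG.trans (by simpa using hG.card_le_choose_of_forall_le_card (by simp; omega) hGt)
end

section
/- Let $v_1, \ldots, v_n$ be positive real numbers with $v_i \le 1$, let $x > 0$ with $k = \lceil x \rceil$, and define $\mathcal{F}_x = \{A \subseteq [n] : \sum_{i \in A} v_i - \sum_{i \notin A} v_i = x\}$. Then $\mathcal{F}_x$ is $k$-intersecting: for all $A, B \in \mathcal{F}_x$, $|A \cap B| \ge k$. -/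
theorem family_is_k_intersecting (n : ℕ) (v : Fin n → ℝ)
    (hv0 : ∀ i, 0 < v i) (hv1 : ∀ i, v i ≤ 1) (x : ℝ) (hx : 0 < x)
    (A B : Finset (Fin n))
    (hA : ∑ i ∈ A, v i - ∑ i ∈ Aᶜ, v i = x)
    (hB : ∑ i ∈ B, v i - ∑ i ∈ Bᶜ, v i = x) :
    ⌈x⌉₊ ≤ (A ∩ B).card := by
  rw [Nat.ceil_le]
  have hSA : ∑ i ∈ A, v i + ∑ i ∈ Aᶜ, v i = ∑ i, v i := Finset.sum_add_sum_compl A v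
  have hSB : ∑ i ∈ B, v i + ∑ i ∈ Bᶜ, v i = ∑ i, v i := Finset.sum_add_sum_compl B v
  have hui : ∑ i ∈ A ∪ B, v i + ∑ i ∈ A ∩ B, v i = ∑ i ∈ A, v i + ∑ i ∈ B, v i :=
    Finset.sum_union_inter
  have hle : ∑ i ∈ A ∪ B, v i ≤ ∑ i, v i :=
    Finset.sum_le_sum_of_subset_of_nonneg (Finset.subset_univ _)
      (fun i _ _ => (hv0 i).le)
  have hx2 : x ≤ ∑ i ∈ A ∩ B, v i := by linarith
  calc x ≤ ∑ i ∈ A ∩ B, v i := hx2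
    _ ≤ ∑ _i ∈ A ∩ B, (1 : ℝ) := Finset.sum_le_sum (fun i _ => hv1 i)
    _ = (A ∩ B).card := by simp
end

section
/- Let $v_1, \ldots, v_n$ be positive reals with $v_i \le 1$ and $x > 0$ with $k = \lceil x \rceil$. If $A, B \subseteq [n]$ satisfy $|A \cap B| < k$, then $\min(s_A, s_B) < x$, where $s_A = \sum_{i \in A} v_i - \sum_{i \notin A} v_i$. -/
theorem small_intersection_small_min (n : ℕ) (v : Fin n → ℝ)
    (hv0 : ∀ i, 0 < v i) (hv1 : ∀ i, v i ≤ 1) (x : ℝ) (hx : 0 < x)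
    (A B : Finset (Fin n)) (hAB : (A ∩ B).card < ⌈x⌉₊) :
    min (∑ i ∈ A, v i - ∑ i ∈ Aᶜ, v i) (∑ i ∈ B, v i - ∑ i ∈ Bᶜ, v i) < x := by
  by_contra h
  push_neg at h
  obtain ⟨hA, hB⟩ := le_min_iff.mp h
  have hcard : ((A ∩ B).card : ℝ) < x := (Nat.lt_ceil).mp hAB
  have hT : ∀ S : Finset (Fin n), ∑ i ∈ Sᶜ, v i = (∑ i : Fin n, v i) - ∑ i ∈ S, v i := by
    intro S
    rw [eq_sub_iff_add_eq, Finset.sum_compl_add_sum]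
  have hunion : ∑ i ∈ A, v i + ∑ i ∈ B, v i
      = ∑ i ∈ A ∪ B, v i + ∑ i ∈ A ∩ B, v i := by
    rw [Finset.sum_union_inter]
  have hle : ∑ i ∈ A ∪ B, v i ≤ ∑ i : Fin n, v i :=
    Finset.sum_le_sum_of_subset_of_nonneg (Finset.subset_univ _)
      (fun i _ _ => (hv0 i).le)
  have hib : ∑ i ∈ A ∩ B, v i ≤ ((A ∩ B).card : ℝ) := by
    calc ∑ i ∈ A ∩ B, v i ≤ ∑ _i ∈ A ∩ B, (1:ℝ) :=
          Finset.sum_le_sum (fun i _ => hv1 i)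
      _ = ((A ∩ B).card : ℝ) := by simp
  rw [hT A] at hA
  rw [hT B] at hB
  nlinarith
end
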